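/- arXiv:math/0612862 — 9 statements merged into one kernel-verified Lean document; each statement's English description precedes it below -/
import Mathlib

section
/- If f : X → Y is an étale morphism of schemes of finite type over k, then for every m ≥ 0 the commutative square formed by f_m : J_m(X) → J_m(Y), the projections π_m^X : J_m(X) → X, π_m^Y : J_m(Y) → Y, and f is Cartesian; i.e. J_m(X) ≅ X ×_Y J_m(Y). -/
open Polynomial

universe u

/-- The truncated polynomial ring `A[t]/(t^{m+1})`. -/
noncomputable abbrev TruncPoly (A : Type*) [CommRing A] (m : ℕ) : Type _ :=
  Polynomial A ⧸ (Ideal.span {(Polynomial.X : Polynomial A) ^ (m + 1)})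

/-- Truncation `A[t]/(t^{m+1}) → A[t]/(t^{p+1})` for `p ≤ m`. -/
noncomputable def truncTrunc (k : Type*) (A : Type*) [CommSemiring k] [CommRing A] [Algebra k A]
    {m p : ℕ} (h : p ≤ m) : TruncPoly A m →ₐ[k] TruncPoly A p :=
  Ideal.Quotient.liftₐ _ (Ideal.Quotient.mkₐ k _) (fun a ha => by
    rw [Ideal.Quotient.mkₐ_eq_mk, Ideal.Quotient.eq_zero_iff_mem]
    exact Ideal.span_singleton_le_span_singleton.2
      (pow_dvd_pow _ (by omega)) ha)

/-- Evaluation at `t = 0`, i.e. the constant term `A[t]/(t^{m+1}) → A`. -/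
noncomputable def truncEv0 (k : Type*) (A : Type*) [CommSemiring k] [CommRing A] [Algebra k A]
    (m : ℕ) : TruncPoly A m →ₐ[k] A :=
  Ideal.Quotient.liftₐ _ ((Polynomial.aeval (0 : A)).restrictScalars k) (fun a ha => by
    obtain ⟨c, rfl⟩ := Ideal.mem_span_singleton.1 ha
    simp)

/-! The constant-term map `A[t]/(t^{m+1}) → A` is surjective with nilpotent kernel `(t)`.
Formal smoothness of `R → S` therefore lifts every pair (an `A`-point of `X`, an `m`-jet of `Y`)
over the same `A`-point of `Y` to an `m`-jet of `X`, and formal unramifiedness makes the lift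
unique. -/

section TruncPoly

variable (k : Type*) {A : Type*} [CommSemiring k] [CommRing A] [Algebra k A] (m : ℕ)

@[simp]
theorem truncEv0_mk (p : A[X]) : truncEv0 k A m (Ideal.Quotient.mk _ p) = p.coeff 0 := by
  simp [truncEv0, coeff_zero_eq_eval_zero]

theorem truncEv0_surjective : Function.Surjective (truncEv0 k A m) :=
  fun a => ⟨Ideal.Quotient.mk _ (C a), by simp⟩

theorem ker_truncEv0_le_span_X :
    RingHom.ker (truncEv0 k A m) ≤ Ideal.span {Ideal.Quotient.mk _ (X : A[X])} := by
  intro x hx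
  obtain ⟨p, rfl⟩ := Ideal.Quotient.mk_surjective x
  obtain ⟨c, rfl⟩ := X_dvd_iff.mpr (by simpa using hx)
  rw [map_mul]
  exact Ideal.mul_mem_right _ _ (Ideal.subset_span rfl)

theorem isNilpotent_ker_truncEv0 : IsNilpotent (RingHom.ker (truncEv0 k A m)) := by
  refine ⟨m + 1, le_bot_iff.mp ((Ideal.pow_right_mono (ker_truncEv0_le_span_X k m) _).trans ?_)⟩
  rw [Ideal.span_singleton_pow, ← map_pow, Ideal.Quotient.mk_singleton_self,
    Ideal.span_singleton_eq_bot.mpr rfl]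

end TruncPoly

section FormallyEtale

variable {k R S B : Type*} [CommRing k] [CommRing R] [CommRing S] [Algebra k R] [Algebra k S]
  [Algebra R S] [IsScalarTower k R S] [CommRing B] [Algebra k B]

theorem Algebra.FormallyUnramified.algHom_ext_of_comp_toAlgHom
    [Algebra.FormallyUnramified R S] {C : Type*} [Ring C] (f : B →+* C)
    (hf : IsNilpotent (RingHom.ker f)) {g₁ g₂ : S →ₐ[k] B}
    (hR : g₁.comp (IsScalarTower.toAlgHom k R S) = g₂.comp (IsScalarTower.toAlgHom k R S))
    (hC : ∀ x, f (g₁ x) = f (g₂ x)) : g₁ = g₂ := by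
  let _ : Algebra R B := (g₁.comp (IsScalarTower.toAlgHom k R S)).toAlgebra
  let g₁' : S →ₐ[R] B := { g₁ with commutes' := fun _ => rfl }
  let g₂' : S →ₐ[R] B := { g₂ with commutes' := fun r => (AlgHom.congr_fun hR r).symm }
  have h' : g₁' = g₂' := Algebra.FormallyUnramified.ext' f hf g₁' g₂' hC
  exact AlgHom.ext fun x => AlgHom.congr_fun h' x

theorem Algebra.FormallySmooth.exists_algHom_of_comp_toAlgHom [Algebra.FormallySmooth R S]
    {C : Type*} [CommRing C] [Algebra k C] (q : B →ₐ[k] C) (hq : Function.Surjective q)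
    (hq' : IsNilpotent (RingHom.ker q)) (φ : S →ₐ[k] C) (ψ : R →ₐ[k] B)
    (h : φ.comp (IsScalarTower.toAlgHom k R S) = q.comp ψ) :
    ∃ g : S →ₐ[k] B, q.comp g = φ ∧ g.comp (IsScalarTower.toAlgHom k R S) = ψ := by
  -- Via `ψ`, `k`-algebra maps `S → B` extending `ψ` are exactly the `R`-algebra maps.
  let _ : Algebra R B := ψ.toAlgebra
  let _ : Algebra R C := (q.comp ψ).toAlgebra
  have _ : IsScalarTower k R B := .of_algebraMap_eq fun c => (ψ.commutes c).symm
  let q' : B →ₐ[R] C := { q with commutes' := fun _ => rfl }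
  let φ' : S →ₐ[R] C := { φ with commutes' := fun r => AlgHom.congr_fun h r }
  let g := Algebra.FormallySmooth.liftOfSurjective φ' q' hq hq'
  exact ⟨g.restrictScalars k,
    AlgHom.ext (Algebra.FormallySmooth.liftOfSurjective_apply φ' q' hq hq'),
    AlgHom.ext g.commutes⟩

theorem Algebra.FormallyEtale.bijective_algHom_to_pullback [Algebra.FormallyEtale R S]
    {C : Type*} [CommRing C] [Algebra k C] (q : B →ₐ[k] C) (hq : Function.Surjective q)
    (hq' : IsNilpotent (RingHom.ker q)) :
    Function.Bijective
      (fun g : S →ₐ[k] B =>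
        (⟨(q.comp g, g.comp (IsScalarTower.toAlgHom k R S)), rfl⟩ :
          {p : (S →ₐ[k] C) × (R →ₐ[k] B) //
            p.1.comp (IsScalarTower.toAlgHom k R S) = q.comp p.2})) := by
  refine ⟨fun g₁ g₂ hg => ?_, fun ⟨⟨φ, ψ⟩, h⟩ => ?_⟩
  · have hg := Subtype.ext_iff.mp hg
    exact Algebra.FormallyUnramified.algHom_ext_of_comp_toAlgHom (q : B →+* C) hq'
      (congrArg Prod.snd hg) fun x => AlgHom.congr_fun (congrArg Prod.fst hg) x
  · obtain ⟨g, hφ, hψ⟩ :=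
      Algebra.FormallySmooth.exists_algHom_of_comp_toAlgHom q hq hq' φ ψ h
    exact ⟨g, Subtype.ext (Prod.ext hφ hψ)⟩

end FormallyEtale

theorem statement_5_general (k : Type*) (R S : Type u) [Field k] [CommRing R] [CommRing S] [Algebra k R]
    [Algebra k S] [Algebra R S] [IsScalarTower k R S] [Algebra.Etale R S] (m : ℕ)
    (A : Type*) [CommRing A] [Algebra k A] :
    Function.Bijective
      (fun g : S →ₐ[k] TruncPoly A m =>
        (⟨((truncEv0 k A m).comp g, g.comp (IsScalarTower.toAlgHom k R S)),
          rfl⟩ :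
          {p : (S →ₐ[k] A) × (R →ₐ[k] TruncPoly A m) //
            p.1.comp (IsScalarTower.toAlgHom k R S) = (truncEv0 k A m).comp p.2})) :=
  Algebra.FormallyEtale.bijective_algHom_to_pullback _
    (truncEv0_surjective k m) (isNilpotent_ker_truncEv0 k m)

/-- If `f : X → Y` is an étale morphism of schemes of finite type over `k`
(affinely: `Y = Spec R`, `X = Spec S` with `R → S` étale), then for every `m ≥ 0` the square
`J_m(X) → J_m(Y)`, `J_m(X) → X`, `J_m(Y) → Y` is Cartesian, i.e. `J_m(X) ≅ X ×_Y J_m(Y)`: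
on `A`-points, `m`-jets of `X` correspond bijectively to pairs consisting of an `A`-point of
`X` and an `m`-jet of `Y` agreeing in `Y(A)`. -/
theorem statement_5 (k : Type*) (R S : Type u) [Field k] [CommRing R] [CommRing S] [Algebra k R]
    [Algebra k S] [Algebra R S] [IsScalarTower k R S] [Algebra.FiniteType k R]
    [Algebra.FiniteType k S] [Algebra.Etale R S] (m : ℕ)
    (A : Type*) [CommRing A] [Algebra k A] :
    Function.Bijective
      (fun g : S →ₐ[k] TruncPoly A m =>
        (⟨((truncEv0 k A m).comp g, g.comp (IsScalarTower.toAlgHom k R S)),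
          rfl⟩ :
          {p : (S →ₐ[k] A) × (R →ₐ[k] TruncPoly A m) //
            p.1.comp (IsScalarTower.toAlgHom k R S) = (truncEv0 k A m).comp p.2})) :=
  statement_5_general k R S m A
end

section
/- Let X be a scheme over an algebraically closed field k and p ∈ X a point such that X is a hypersurface in 𝔸^n defined by f = f_r + f_{r+1} + … with f_i homogeneous of degree i, f_r ≠ 0, and p the origin. Then the fiber of J_r(X) over p is identified, via the projection to the tangent space, with T × 𝔸^{(r-1)n} ⊂ 𝔸^n × 𝔸^{(r-1)n}, where T ⊂ 𝔸^n is the cone defined by f_r (the tangent cone of X at p). -/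
open Polynomial MvPolynomial


private lemma pow_sub_pow_dvd' {R : Type*} [CommRing R] (x p q : R) (e : ℕ)
    (hp : x ∣ p) (hq : x ∣ q) (hpq : x ^ 2 ∣ p - q) : x ^ (e + 1) ∣ p ^ e - q ^ e := by
  cases e with
  | zero => simp
  | succ e =>
    rw [← geom_sum₂_mul]
    have h1 : x ^ e ∣ ∑ i ∈ Finset.range (e + 1), p ^ i * q ^ (e + 1 - 1 - i) := by
      refine Finset.dvd_sum fun i hi => ?_
      have hi' : i ≤ e := Nat.lt_succ_iff.mp (Finset.mem_range.mp hi)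
      have : x ^ e = x ^ i * x ^ (e - i) := by rw [← pow_add, Nat.add_sub_cancel' hi']
      rw [this]
      exact mul_dvd_mul (pow_dvd_pow_of_dvd hp i) (by simpa using pow_dvd_pow_of_dvd hq (e - i))
    have : x ^ (e + 1 + 1) = x ^ e * x ^ 2 := by ring
    rw [this]
    exact mul_dvd_mul h1 hpq

private lemma prod_sub_prod_dvd' {R : Type*} [CommRing R] {ι : Type*} (x : R) (s : Finset ι)
    (P Q : ι → R) (d : ι → ℕ) (hP : ∀ i ∈ s, x ^ d i ∣ P i) (hQ : ∀ i ∈ s, x ^ d i ∣ Q i)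
    (hPQ : ∀ i ∈ s, x ^ (d i + 1) ∣ P i - Q i) :
    x ^ ((∑ i ∈ s, d i) + 1) ∣ ∏ i ∈ s, P i - ∏ i ∈ s, Q i := by
  classical
  induction s using Finset.induction_on with
  | empty => simp
  | @insert j s' hj ih =>
    rw [Finset.prod_insert hj, Finset.prod_insert hj, Finset.sum_insert hj]
    have key : P j * ∏ i ∈ s', P i - Q j * ∏ i ∈ s', Q i
        = (P j - Q j) * ∏ i ∈ s', P i + Q j * (∏ i ∈ s', P i - ∏ i ∈ s', Q i) := by ring
    rw [key]
    refine dvd_add ?_ ?_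
    · have h1 : x ^ (∑ i ∈ s', d i) ∣ ∏ i ∈ s', P i := by
        rw [← Finset.prod_pow_eq_pow_sum]
        exact Finset.prod_dvd_prod_of_dvd _ _ fun i hi => hP i (Finset.mem_insert_of_mem hi)
      have : x ^ (d j + ∑ i ∈ s', d i + 1) = x ^ (d j + 1) * x ^ (∑ i ∈ s', d i) := by ring
      rw [this]
      exact mul_dvd_mul (hPQ j (Finset.mem_insert_self j s')) h1
    · have : x ^ (d j + ∑ i ∈ s', d i + 1) = x ^ (d j) * x ^ ((∑ i ∈ s', d i) + 1) := by ring
      rw [this]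
      exact mul_dvd_mul (hQ j (Finset.mem_insert_self j s'))
        (ih (fun i hi => hP i (Finset.mem_insert_of_mem hi))
            (fun i hi => hQ i (Finset.mem_insert_of_mem hi))
            (fun i hi => hPQ i (Finset.mem_insert_of_mem hi)))

example : True := trivial

private lemma hom_support_degree {σ k : Type*} [CommRing k] {g : MvPolynomial σ k} {d : ℕ}
    (hg : g.IsHomogeneous d) {m : σ →₀ ℕ} (hm : m ∈ g.support) :
    ∑ i ∈ m.support, m i = d := by
  have := hg (MvPolynomial.mem_support_iff.mp hm)
  simpa [Finsupp.weight, Finsupp.linearCombination, Finsupp.sum] using this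

/-- Evaluation of a homogeneous polynomial at scaled variables `c i • X`. -/
private lemma aeval_linear {n : ℕ} {k : Type*} [Field k] {g : MvPolynomial (Fin n) k} {d : ℕ}
    (hg : g.IsHomogeneous d) (c : Fin n → k) :
    MvPolynomial.aeval (fun i => Polynomial.C (c i) * Polynomial.X) g
      = Polynomial.C (MvPolynomial.eval c g) * Polynomial.X ^ d := by
  rw [MvPolynomial.aeval_def, MvPolynomial.eval₂_eq, MvPolynomial.eval_eq, map_sum, Finset.sum_mul]
  refine Finset.sum_congr rfl fun m hm => ?_
  have hdeg := hom_support_degree hg hm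
  simp only [mul_pow, Finset.prod_mul_distrib, algebraMap_eq, map_mul, map_prod, map_pow,
    Finset.prod_pow_eq_pow_sum, hdeg]
  simp [Polynomial.algebraMap_eq]; ring

private lemma aeval_sub_dvd {n : ℕ} {k : Type*} [Field k] {g : MvPolynomial (Fin n) k} {d : ℕ}
    (hg : g.IsHomogeneous d) (u v : Fin n → Polynomial k)
    (hu : ∀ i, Polynomial.X ∣ u i) (hv : ∀ i, Polynomial.X ∣ v i)
    (huv : ∀ i, Polynomial.X ^ 2 ∣ u i - v i) :
    Polynomial.X ^ (d + 1) ∣ MvPolynomial.aeval u g - MvPolynomial.aeval v g := by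
  rw [MvPolynomial.aeval_def, MvPolynomial.eval₂_eq, MvPolynomial.aeval_def,
    MvPolynomial.eval₂_eq, ← Finset.sum_sub_distrib]
  refine Finset.dvd_sum fun m hm => ?_
  rw [← mul_sub]
  refine Dvd.dvd.mul_left ?_ _
  have hdeg := hom_support_degree hg hm
  rw [← hdeg]
  exact prod_sub_prod_dvd' _ _ _ _ _
    (fun i _ => pow_dvd_pow_of_dvd (hu i) _)
    (fun i _ => pow_dvd_pow_of_dvd (hv i) _)
    (fun i _ => pow_sub_pow_dvd' _ _ _ _ (hu i) (hv i) (huv i))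

/-- Let `X ⊂ 𝔸ⁿ` be the hypersurface defined by `f = f_r + f_{r+1} + …` with
`f_i` homogeneous of degree `i` and `f_r ≠ 0`, and let `p` be the origin.  An `r`-jet over `p`
is a tuple `uᵢ = Σ_{j=1}^r a_{i,j} t^j` with `f(u) ≡ 0 mod t^{r+1}`; the claim is that this
condition holds iff the vector of linear coefficients `(a_{i,1})_i` lies in the cone `T`
defined by `f_r` (the tangent cone of `X` at `p`), the higher coefficients being free: the
fiber of `J_r(X)` over `p` is `T × 𝔸^{(r-1)n} ⊂ 𝔸ⁿ × 𝔸^{(r-1)n}`. -/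
theorem statement_7 (k : Type*) [Field k] [IsAlgClosed k] (n r : ℕ) (hr : 0 < r)
    (f : MvPolynomial (Fin n) k)
    (hlow : ∀ i < r, (homogeneousComponent i) f = 0)
    (hfr : (homogeneousComponent r) f ≠ 0)
    (a : Fin n → Fin r → k) :
    (MvPolynomial.aeval
        (fun i => ∑ j : Fin r, Polynomial.C (a i j) * Polynomial.X ^ ((j : ℕ) + 1)) f ∈
      Ideal.span {(Polynomial.X : Polynomial k) ^ (r + 1)}) ↔
    MvPolynomial.eval (fun i => a i ⟨0, hr⟩) ((homogeneousComponent r) f) = 0 := by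
  classical
  set z : Fin r := ⟨0, hr⟩ with hz
  set c : Fin n → k := fun i => a i z with hc
  set u : Fin n → Polynomial k :=
    fun i => ∑ j : Fin r, Polynomial.C (a i j) * Polynomial.X ^ ((j : ℕ) + 1) with hu_def
  set v : Fin n → Polynomial k := fun i => Polynomial.C (c i) * Polynomial.X with hv_def
  have hu : ∀ i, Polynomial.X ∣ u i := fun i =>
    Finset.dvd_sum fun j _ => Dvd.dvd.mul_left (dvd_pow_self _ (Nat.succ_ne_zero _)) _
  have hv : ∀ i, Polynomial.X ∣ v i := fun i => Dvd.dvd.mul_left dvd_rfl _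
  have huv : ∀ i, Polynomial.X ^ 2 ∣ u i - v i := by
    intro i
    have hsplit : u i = v i + ∑ j ∈ Finset.univ.erase z, Polynomial.C (a i j)
        * Polynomial.X ^ ((j : ℕ) + 1) := by
      rw [hu_def]
      simp only
      rw [← Finset.add_sum_erase _ _ (Finset.mem_univ z)]
      simp [hv_def, hz, hc]
    rw [hsplit, add_sub_cancel_left]
    refine Finset.dvd_sum fun j hj => Dvd.dvd.mul_left ?_ _
    have hj0 : (j : ℕ) ≠ 0 := by
      intro h
      exact (Finset.mem_erase.mp hj).1 (by apply Fin.ext; simpa [hz] using h)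
    exact pow_dvd_pow _ (by omega)
  set N := f.totalDegree with hN
  have hrN : r ≤ N := by
    by_contra h
    exact hfr (MvPolynomial.homogeneousComponent_eq_zero _ _ (by omega))
  have hterm : ∀ i ∈ Finset.range (N + 1),
      Polynomial.X ^ (r + 1) ∣ MvPolynomial.aeval u ((homogeneousComponent i) f)
        - (if i = r then Polynomial.C (MvPolynomial.eval c ((homogeneousComponent r) f))
            * Polynomial.X ^ r else 0) := by
    intro i _
    rcases lt_trichotomy i r with h | h | h
    · simp [hlow i h, h.ne]
    · subst h
      simp only [if_pos rfl]
      rw [← aeval_linear (homogeneousComponent_isHomogeneous i f) c]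
      exact aeval_sub_dvd (homogeneousComponent_isHomogeneous i f) u v hu hv huv
    · simp only [if_neg h.ne', sub_zero]
      have h2 := aeval_sub_dvd (homogeneousComponent_isHomogeneous i f) u v hu hv huv
      have h3 : Polynomial.X ^ (r + 1) ∣ MvPolynomial.aeval v ((homogeneousComponent i) f) := by
        rw [aeval_linear (homogeneousComponent_isHomogeneous i f) c]
        exact Dvd.dvd.mul_left (pow_dvd_pow _ (by omega)) _
      have h4 := dvd_add ((pow_dvd_pow (Polynomial.X : Polynomial k) (by omega : r+1 ≤ i+1)).trans h2) h3
      simpa using h4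
  have hmain : Polynomial.X ^ (r + 1) ∣ MvPolynomial.aeval u f
      - Polynomial.C (MvPolynomial.eval c ((homogeneousComponent r) f)) * Polynomial.X ^ r := by
    nth_rewrite 1 [← MvPolynomial.sum_homogeneousComponent f]
    rw [map_sum, ← hN]
    have hsum : Polynomial.C (MvPolynomial.eval c ((homogeneousComponent r) f)) * Polynomial.X ^ r
        = ∑ i ∈ Finset.range (N + 1), (if i = r then
            Polynomial.C (MvPolynomial.eval c ((homogeneousComponent r) f))
            * Polynomial.X ^ r else 0) := by
      rw [Finset.sum_ite_eq' (Finset.range (N + 1)) r]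
      simp [Finset.mem_range, Nat.lt_succ_iff, hrN]
    rw [hsum, ← Finset.sum_sub_distrib]
    exact Finset.dvd_sum hterm
  rw [Ideal.mem_span_singleton]
  constructor
  · intro h
    have h2 : Polynomial.X ^ (r + 1) ∣
        Polynomial.C (MvPolynomial.eval c ((homogeneousComponent r) f)) * Polynomial.X ^ r := by
      have h3 := dvd_sub h hmain
      simpa using h3
    have := (Polynomial.X_pow_dvd_iff.mp h2) r (Nat.lt_succ_self r)
    simpa using this
  · intro h
    have : MvPolynomial.aeval u f = MvPolynomial.aeval u f
        - Polynomial.C (MvPolynomial.eval c ((homogeneousComponent r) f)) * Polynomial.X ^ r := by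
      rw [hc] at h ⊢
      simp [h]
    rw [this]
    exact hmain
end

section
/- If all truncation maps between the fibers of jet schemes over a point p ∈ X are surjective, then p is a nonsingular point of X. Equivalently (the key step): if a tangent vector v ∈ T_p X lifts to J_m(X) over p for every m, then v lies in the tangent cone of X at p. -/
open Polynomial MvPolynomial

lemma aux_smul {k : Type*} [CommRing k] {n d : ℕ} (φ : MvPolynomial (Fin n) k)
    (hφ : φ.IsHomogeneous d) (w : Fin n → Polynomial k) :
    MvPolynomial.aeval (fun i => Polynomial.X * w i) φ
      = Polynomial.X ^ d * MvPolynomial.aeval w φ := by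
  rw [MvPolynomial.aeval_def, MvPolynomial.eval₂_eq, MvPolynomial.aeval_def,
    MvPolynomial.eval₂_eq, Finset.mul_sum]
  apply Finset.sum_congr rfl
  intro m hm
  have hd : ∑ i ∈ m.support, m i = d := by
    have := hφ (MvPolynomial.mem_support_iff.mp hm)
    simpa [Finsupp.weight_apply, Finsupp.sum, smul_eq_mul] using this
  simp_rw [mul_pow]
  rw [Finset.prod_mul_distrib, Finset.prod_pow_eq_pow_sum, hd]
  ring

/-- (Key step of: if all truncation maps between fibers of jet schemes over a
point `p ∈ X` are surjective, then `p` is nonsingular.)  Let `X = V(I) ⊆ 𝔸ⁿ` with `p` the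
origin.  If a tangent vector `v ∈ T_p X` lifts to an `m`-jet of `X` based at `p` for every
`m`, then `v` lies in the tangent cone of `X` at `p`: for every `g ∈ I`, writing
`g = g_r + g_{r+1} + …` with lowest-degree form `g_r`, one has `g_r(v) = 0`. -/
theorem statement_8 (k : Type*) [Field k] [IsAlgClosed k] (n : ℕ)
    (I : Ideal (MvPolynomial (Fin n) k)) (v : Fin n → k)
    (hlift : ∀ m : ℕ, ∃ u : Fin n → Polynomial k,
      (∀ i, (u i).coeff 0 = 0) ∧ (∀ i, (u i).coeff 1 = v i) ∧
      ∀ g ∈ I, MvPolynomial.aeval u g ∈ Ideal.span {(Polynomial.X : Polynomial k) ^ (m + 1)}) :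
    ∀ g ∈ I, ∀ r : ℕ, (∀ i < r, (homogeneousComponent i) g = 0) →
      MvPolynomial.eval v ((homogeneousComponent r) g) = 0 := by
  intro g hg r hr
  by_cases hrd : g.totalDegree < r
  · rw [MvPolynomial.homogeneousComponent_eq_zero r g hrd, map_zero]
  push_neg at hrd
  obtain ⟨u, hu0, hu1, hmem⟩ := hlift r
  set w : Fin n → Polynomial k := fun i => (u i).divX with hw
  have huw : u = fun i => Polynomial.X * w i := by
    funext i
    have h := Polynomial.X_mul_divX_add (u i)
    rw [hu0 i, map_zero, add_zero] at h
    exact h.symm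
  have hcoeff : (MvPolynomial.aeval u g).coeff r = 0 := by
    obtain ⟨q, hq⟩ := Ideal.mem_span_singleton.mp (hmem g hg)
    rw [hq, mul_comm, Polynomial.coeff_mul_X_pow']
    simp
  have key : ∀ i, (MvPolynomial.aeval u ((homogeneousComponent i) g)).coeff r =
      if i = r then MvPolynomial.eval v ((homogeneousComponent r) g) else 0 := by
    intro i
    have hom := MvPolynomial.homogeneousComponent_isHomogeneous i g
    have heq : MvPolynomial.aeval u ((homogeneousComponent i) g)
        = Polynomial.X ^ i * MvPolynomial.aeval w ((homogeneousComponent i) g) := by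
      rw [huw]; exact aux_smul _ hom w
    rw [heq, mul_comm, Polynomial.coeff_mul_X_pow']
    rcases lt_trichotomy i r with h | h | h
    · rw [hr i h, map_zero, if_neg (ne_of_lt h)]
      simp
    · subst h
      simp only [le_refl, if_pos, Nat.sub_self, if_pos rfl]
      rw [Polynomial.coeff_zero_eq_eval_zero, ← Polynomial.coe_aeval_eq_eval,
        MvPolynomial.comp_aeval_apply]
      have hwv : (fun j => (Polynomial.aeval (0 : k)) (w j)) = v := by
        funext j
        rw [Polynomial.coe_aeval_eq_eval, ← Polynomial.coeff_zero_eq_eval_zero, hw,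
          Polynomial.coeff_divX, zero_add, hu1 j]
      rw [hwv]
      rw [MvPolynomial.aeval_def, Algebra.algebraMap_self]
      rfl
    · rw [if_neg (not_le.mpr h), if_neg (ne_of_gt h)]
  have hsum : MvPolynomial.aeval u g = ∑ i ∈ Finset.range (g.totalDegree + 1),
      MvPolynomial.aeval u ((homogeneousComponent i) g) := by
    conv_lhs => rw [← MvPolynomial.sum_homogeneousComponent g]
    rw [map_sum]
  rw [hsum, Polynomial.finset_sum_coeff] at hcoeff
  simp_rw [key] at hcoeff
  rwa [Finset.sum_ite_eq' _ r, if_pos (Finset.mem_range.mpr (Nat.lt_succ_of_le hrd))] at hcoeff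
end

section
/- Let f : X' → X be a proper morphism of schemes of finite type over k, and Z ⊂ X a closed subset such that f is an isomorphism over X ∖ Z. Then the induced map on arcs J_∞(X') ∖ J_∞(f^{-1}(Z)) → J_∞(X) ∖ J_∞(Z) is bijective. -/
open AlgebraicGeometry CategoryTheory

universe u

/-!
An arc `δ : Spec k⟦t⟧ → X` not contained in the closed set `Z` sends the generic point of
`Spec k⟦t⟧`, which specializes to every point, outside `Z`. So the generic arc
`Spec k((t)) → X` lands in `X ∖ Z`, where `f` is an isomorphism, and lifts uniquely to `X'`.
Since `k⟦t⟧` is a valuation ring with fraction field `k((t))`, the valuative criterion for the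
proper morphism `f` extends this lift uniquely to an arc in `X'` over `δ`; any arc over `δ`
restricts to a lift of the generic arc, which gives uniqueness. An arc over `δ` cannot lie
in `f⁻¹(Z)`, since `δ` does not lie in `Z`.
-/

lemma PrimeSpectrum.comap_algebraMap_eq_bot {R K : Type*} [CommRing R] [IsDomain R] [Field K]
    [Algebra R K] [FaithfulSMul R K] (x : PrimeSpectrum K) :
    PrimeSpectrum.comap (algebraMap R K) x = ⊥ := by
  ext1
  rw [PrimeSpectrum.comap_asIdeal, Ideal.eq_bot_of_prime x.asIdeal,
    Ideal.comap_bot_of_injective _ (FaithfulSMul.algebraMap_injective R K)]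
  rfl

namespace AlgebraicGeometry

lemma Scheme.Hom.base_bot_notMem_of_not_range_subset {R : Type u} [CommRing R] [IsDomain R]
    {X : Scheme.{u}} (δ : Spec (.of R) ⟶ X) {Z : Set X} (hZ : IsClosed Z)
    (hδ : ¬ Set.range δ.base ⊆ Z) : δ.base (⊥ : PrimeSpectrum R) ∉ Z := by
  refine fun hbot => hδ ?_
  rintro _ ⟨x, rfl⟩
  have hspec : (⊥ : PrimeSpectrum R) ⤳ x := (PrimeSpectrum.le_iff_specializes _ x).mp bot_le
  exact (hspec.map δ.base.hom.continuous).mem_closed hZ hbot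

lemma range_specMap_algebraMap_comp_subset_compl {R K : Type u} [CommRing R] [IsDomain R]
    [Field K] [Algebra R K] [FaithfulSMul R K] {X : Scheme.{u}} (δ : Spec (.of R) ⟶ X)
    {Z : Set X} (hZ : IsClosed Z) (hδ : ¬ Set.range δ.base ⊆ Z) :
    Set.range (Spec.map (CommRingCat.ofHom (algebraMap R K)) ≫ δ).base ⊆ Zᶜ := by
  rintro _ ⟨x, rfl⟩
  have hx : (Spec.map (CommRingCat.ofHom (algebraMap R K))).base x = (⊥ : PrimeSpectrum R) :=
    PrimeSpectrum.comap_algebraMap_eq_bot x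
  rw [Scheme.Hom.comp_apply, hx]
  exact δ.base_bot_notMem_of_not_range_subset hZ hδ

lemma existsUnique_lift_of_isIso_morphismRestrict {X X' T : Scheme.{u}} (f : X' ⟶ X)
    (U : X.Opens) [IsIso (f ∣_ U)] (g : T ⟶ X) (hg : Set.range g.base ⊆ U) :
    ∃! h : T ⟶ X', h ≫ f = g := by
  have hg' : Set.range g.base ⊆ Set.range U.ι.base := by rwa [Scheme.Opens.range_ι]
  let gU : T ⟶ U := IsOpenImmersion.lift U.ι g hg'
  refine ⟨gU ≫ inv (f ∣_ U) ≫ (f ⁻¹ᵁ U).ι, ?_, fun h hfac => ?_⟩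
  · simp [gU, ← morphismRestrict_ι]
  · have hrange : Set.range h.base ⊆ Set.range (f ⁻¹ᵁ U).ι.base := by
      rw [Scheme.Opens.range_ι]
      rintro _ ⟨t, rfl⟩
      exact hg ⟨t, by rw [← hfac]; rfl⟩
    let h' : T ⟶ f ⁻¹ᵁ U := IsOpenImmersion.lift (f ⁻¹ᵁ U).ι h hrange
    have hfac' : h' ≫ f ∣_ U = gU := by
      rw [← cancel_mono U.ι, Category.assoc, morphismRestrict_ι, IsOpenImmersion.lift_fac,
        ← Category.assoc, IsOpenImmersion.lift_fac, hfac]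
    rw [← hfac', Category.assoc, IsIso.hom_inv_id_assoc, IsOpenImmersion.lift_fac]

lemma IsProper.valuativeCriterion {X Y : Scheme.{u}} (f : X ⟶ Y) [IsProper f] :
    ValuativeCriterion f := by
  have h : (ValuativeCriterion ⊓ @QuasiCompact ⊓ @QuasiSeparated ⊓ @LocallyOfFiniteType) f := by
    rw [← IsProper.eq_valuativeCriterion]
    infer_instance
  exact h.1.1.1

lemma ValuativeCriterion.existsUnique_lift {X Y : Scheme.{u}} {f : X ⟶ Y}
    (hf : ValuativeCriterion f) {R K : Type u} [CommRing R] [IsDomain R] [ValuationRing R]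
    [Field K] [Algebra R K] [IsFractionRing R K] (δ : Spec (.of R) ⟶ Y)
    (hgeneric : ∃! ε : Spec (.of K) ⟶ X,
      ε ≫ f = Spec.map (CommRingCat.ofHom (algebraMap R K)) ≫ δ) :
    ∃! γ : Spec (.of R) ⟶ X, γ ≫ f = δ := by
  obtain ⟨ε, hε, hε_uniq⟩ := hgeneric
  let S : ValuativeCommSq f := { R := R, K := K, i₁ := ε, i₂ := δ, commSq := ⟨hε⟩ }
  obtain ⟨hS⟩ := hf S
  refine ⟨hS.default.l, hS.default.fac_right, fun γ hγ => ?_⟩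
  have hγε : Spec.map (CommRingCat.ofHom (algebraMap R K)) ≫ γ = ε :=
    hε_uniq _ (by simp only [Category.assoc, hγ])
  exact congrArg CommSq.LiftStruct.l (hS.uniq ⟨γ, hγε, hγ⟩)

end AlgebraicGeometry

/-- Let `f : X' → X` be a proper morphism of schemes and `Z ⊂ X` a closed
subset such that `f` is an isomorphism over `X ∖ Z`.  Then the induced map on arc spaces
`J_∞(X') ∖ J_∞(f⁻¹(Z)) → J_∞(X) ∖ J_∞(Z)` is bijective: every arc `δ : Spec k[[t]] → X` not
factoring through `Z` lifts uniquely to an arc in `X'` not factoring through `f⁻¹(Z)`. -/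
theorem statement_9 (k : Type u) [Field k] (X X' : Scheme.{u}) (f : X' ⟶ X) [IsProper f]
    (Z : Set X) (hZ : IsClosed Z)
    (U : X.Opens) (hU : (U : Set X) = Zᶜ) (hiso : IsIso (f ∣_ U)) :
    ∀ δ : Spec (CommRingCat.of (PowerSeries k)) ⟶ X,
      ¬ (Set.range δ.base ⊆ Z) →
      ∃! γ : Spec (CommRingCat.of (PowerSeries k)) ⟶ X',
        γ ≫ f = δ ∧ ¬ (Set.range γ.base ⊆ f.base ⁻¹' Z) := by
  intro δ hδ
  have hgeneric := range_specMap_algebraMap_comp_subset_compl (K := LaurentSeries k) δ hZ hδ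
  rw [← hU] at hgeneric
  obtain ⟨γ, hγ, hγ_uniq⟩ := (IsProper.valuativeCriterion f).existsUnique_lift δ
    (existsUnique_lift_of_isIso_morphismRestrict f U _ hgeneric)
  refine ⟨γ, ⟨hγ, fun hγZ => hδ ?_⟩, fun γ' hγ' => hγ_uniq γ' hγ'.1⟩
  rintro _ ⟨x, rfl⟩
  rw [← hγ]
  exact hγZ ⟨x, rfl⟩
end

section
/- If k is an uncountable algebraically closed field and X is a scheme of finite type over k such that the image of every cylinder in J_m(X) is constructible, then every decreasing sequence C_1 ⊇ C_2 ⊇ ⋯ of nonempty cylinders in J_∞(X) has nonempty intersection. -/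
open MvPolynomial

/-- Zariski topology on `k`-points of affine space. -/
def zariskiTop (σ k : Type*) [CommRing k] : TopologicalSpace (σ → k) :=
  TopologicalSpace.generateFrom
    {s | ∃ p : MvPolynomial σ k, s = {x | MvPolynomial.eval x p ≠ 0}}

/-- Constructible: a finite union of intersections of an open and a closed set. -/
def IsConstructibleIn {α : Type*} (t : TopologicalSpace α) (s : Set α) : Prop :=
  ∃ (N : ℕ) (U C : Fin N → Set α),
    (∀ a, @IsOpen _ t (U a) ∧ @IsClosed _ t (C a)) ∧ s = ⋃ a, U a ∩ C a

/-- The `k`-points of the arc space of `X = V(f₁,…,f_r) ⊆ 𝔸ⁿ`, in coefficients. -/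
def arcSol (k : Type*) [CommRing k] {n r : ℕ} (f : Fin r → MvPolynomial (Fin n) k) :
    Set (Fin n × ℕ → k) :=
  {x | ∀ l, MvPolynomial.aeval (fun i : Fin n => PowerSeries.mk fun j => x (i, j)) (f l) = 0}

/-- Truncation of an arc to its `m`-jet, in coefficients. -/
def truncAt (k : Type*) {n : ℕ} (m : ℕ) (x : Fin n × ℕ → k) : Fin n × Fin (m + 1) → k :=
  fun p => x (p.1, (p.2 : ℕ))

/-- A cylinder in the arc space: the preimage `ψ_m⁻¹(S)` of a constructible set of `m`-jets. -/
def IsCylinder (k : Type*) [CommRing k] {n r : ℕ} (f : Fin r → MvPolynomial (Fin n) k)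
    (C : Set (Fin n × ℕ → k)) : Prop :=
  ∃ (m : ℕ) (S : Set (Fin n × Fin (m + 1) → k)),
    IsConstructibleIn (zariskiTop (Fin n × Fin (m + 1)) k) S ∧
    C = arcSol k f ∩ truncAt k m ⁻¹' S

namespace ArcAux

/-- iterated application of a dependent step function -/
noncomputable def natChain {M : ℕ → Sort*} (z0 : M 0) (F : ∀ m, M m → M (m+1)) : ∀ m, M m
  | 0 => z0
  | (m+1) => F m (natChain z0 F m)

/-- restriction of an `(m+1)`-jet to an `m`-jet -/
def res (k : Type*) {n : ℕ} (m : ℕ) (w : Fin n × Fin (m+2) → k) : Fin n × Fin (m+1) → k :=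
  fun p => w (p.1, p.2.castSucc)


variable {k : Type*} [Field k] {σ : Type*}

/-- zero locus -/
def zl (T : Set (MvPolynomial σ k)) : Set (σ → k) := {x | ∀ p ∈ T, eval x p = 0}

/-- vanishing ideal -/
def vi (Z : Set (σ → k)) : Ideal (MvPolynomial σ k) where
  carrier := {p | ∀ x ∈ Z, eval x p = 0}
  add_mem' := fun ha hb x hx => by simp [map_add, ha x hx, hb x hx]
  zero_mem' := fun x hx => by simp
  smul_mem' := fun c p hp x hx => by simp [smul_eq_mul, hp x hx]

lemma mem_vi {p : MvPolynomial σ k} {Z : Set (σ → k)} :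
    p ∈ vi Z ↔ ∀ x ∈ Z, eval x p = 0 := Iff.rfl

lemma isOpen_ne (p : MvPolynomial σ k) :
    @IsOpen _ (zariskiTop σ k) {x | eval x p ≠ 0} :=
  TopologicalSpace.GenerateOpen.basic _ ⟨p, rfl⟩

lemma exists_basic {U : Set (σ → k)} (hU : @IsOpen _ (zariskiTop σ k) U) :
    ∀ x ∈ U, ∃ p : MvPolynomial σ k, eval x p ≠ 0 ∧ {y | eval y p ≠ 0} ⊆ U := by
  induction hU with
  | basic s hs =>
    obtain ⟨p, rfl⟩ := hs
    exact fun x hx => ⟨p, hx, fun y hy => hy⟩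
  | univ => exact fun x _ => ⟨1, by simp, fun y _ => trivial⟩
  | inter s t _ _ ihs iht =>
    intro x hx
    obtain ⟨p, hp, hps⟩ := ihs x hx.1
    obtain ⟨q, hq, hqt⟩ := iht x hx.2
    refine ⟨p * q, by simp [hp, hq], fun y hy => ?_⟩
    rw [Set.mem_setOf_eq, map_mul] at hy
    exact ⟨hps (left_ne_zero_of_mul hy), hqt (right_ne_zero_of_mul hy)⟩
  | sUnion S _ ih =>
    intro x hx
    obtain ⟨t, ht, hxt⟩ := hx
    obtain ⟨p, hp, hpt⟩ := ih t ht x hxt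
    exact ⟨p, hp, fun y hy => ⟨t, ht, hpt hy⟩⟩

lemma isClosed_zl (T : Set (MvPolynomial σ k)) : @IsClosed _ (zariskiTop σ k) (zl T) := by
  letI : TopologicalSpace (σ → k) := zariskiTop σ k
  rw [← isOpen_compl_iff]
  have : (zl T)ᶜ = ⋃ p ∈ T, {x : σ → k | eval x p ≠ 0} := by
    ext x; simp [zl]
  rw [this]
  exact isOpen_biUnion fun p _ => isOpen_ne p

lemma zl_vi_of_closed {Z : Set (σ → k)} (hZ : @IsClosed _ (zariskiTop σ k) Z) :
    zl (vi Z : Set (MvPolynomial σ k)) = Z := by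
  apply Set.Subset.antisymm
  swap
  · intro x hx p hp
    exact hp x hx
  intro x hx
  by_contra hxZ
  obtain ⟨p, hp, hpsub⟩ := exists_basic hZ.isOpen_compl x hxZ
  exact hp (hx p (fun y hy => by_contra fun h => hpsub h hy))


lemma zl_anti {T T' : Set (MvPolynomial σ k)} (h : T ⊆ T') : zl T' ⊆ zl T :=
  fun x hx p hp => hx p (h hp)

lemma vi_anti {s s' : Set (σ → k)} (h : s ⊆ s') : vi s' ≤ vi s :=
  fun p hp x hx => hp x (h hx)

/-- Zariski closure -/
def cl (s : Set (σ → k)) : Set (σ → k) := zl (vi s : Set (MvPolynomial σ k))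

lemma isClosed_cl (s : Set (σ → k)) : @IsClosed _ (zariskiTop σ k) (cl s) := isClosed_zl _

lemma subset_cl (s : Set (σ → k)) : s ⊆ cl s := fun x hx p hp => hp x hx

lemma cl_mono {s s' : Set (σ → k)} (h : s ⊆ s') : cl s ⊆ cl s' :=
  zl_anti (vi_anti h)

lemma cl_of_closed {Z : Set (σ → k)} (hZ : @IsClosed _ (zariskiTop σ k) Z) : cl Z = Z :=
  zl_vi_of_closed hZ

lemma cl_min {s Z : Set (σ → k)} (h : s ⊆ Z) (hZ : @IsClosed _ (zariskiTop σ k) Z) :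
    cl s ⊆ Z := (cl_of_closed hZ) ▸ cl_mono h

lemma cl_empty : cl (∅ : Set (σ → k)) = ∅ := by
  ext x
  simp only [cl, zl, Set.mem_setOf_eq, Set.mem_empty_iff_false, iff_false, not_forall]
  exact ⟨1, fun y hy => hy.elim, by simp⟩

lemma nonempty_of_cl {s : Set (σ → k)} (h : (cl s).Nonempty) : s.Nonempty := by
  rcases Set.eq_empty_or_nonempty s with rfl | hs
  · rw [cl_empty] at h; exact absurd h (by simp)
  · exact hs

lemma closed_eq_of_vi_eq {Z Z' : Set (σ → k)} (hZ : @IsClosed _ (zariskiTop σ k) Z)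
    (hZ' : @IsClosed _ (zariskiTop σ k) Z') (h : vi Z = vi Z') : Z = Z' := by
  rw [← zl_vi_of_closed hZ, ← zl_vi_of_closed hZ', h]

lemma vi_lt_of_closed_lt {Z Z' : Set (σ → k)} (hZ : @IsClosed _ (zariskiTop σ k) Z)
    (hZ' : @IsClosed _ (zariskiTop σ k) Z') (hss : Z ⊆ Z') (hne : Z ≠ Z') :
    vi Z' < vi Z :=
  lt_of_le_of_ne (vi_anti hss) (fun h => hne (closed_eq_of_vi_eq hZ hZ' h.symm))

lemma antitone_of_succ {B : ℕ → Set (σ → k)} (h : ∀ i, B (i+1) ⊆ B i) :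
    ∀ {i j}, i ≤ j → B j ⊆ B i :=
  fun {i j} hij => antitone_nat_of_succ_le (fun n => h n) hij

/-- descending chains of Zariski-closed sets stabilize -/
lemma stabilizes [Finite σ] (Z : ℕ → Set (σ → k))
    (hZ : ∀ i, @IsClosed _ (zariskiTop σ k) (Z i)) (hdec : ∀ i, Z (i+1) ⊆ Z i) :
    ∃ N, ∀ i, N ≤ i → Z i = Z N := by
  have hmono : Monotone fun i => vi (Z i) :=
    monotone_nat_of_le_succ fun n => vi_anti (hdec n)
  obtain ⟨N, hN⟩ := monotone_stabilizes_iff_noetherian.mpr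
    (by rw [← isNoetherianRing_iff]; infer_instance) ⟨fun i => vi (Z i), hmono⟩
  refine ⟨N, fun i hi => ?_⟩
  have h2 : vi (Z N) = vi (Z i) := hN i hi
  rw [← zl_vi_of_closed (hZ i), ← zl_vi_of_closed (hZ N), h2]


section Generic

variable {α : Type*} [t : TopologicalSpace α]

lemma constr_inter_closed {A F : Set α} (hA : IsConstructibleIn t A) (hF : IsClosed F) :
    IsConstructibleIn t (A ∩ F) := by
  obtain ⟨N, U, Cc, hUC, rfl⟩ := hA
  refine ⟨N, U, fun a => Cc a ∩ F, fun a => ⟨(hUC a).1, IsClosed.inter (hUC a).2 hF⟩, ?_⟩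
  rw [Set.iUnion_inter]
  exact Set.iUnion_congr fun a => by rw [Set.inter_assoc]

lemma irr_cover {Z : Set α} (hZne : Z.Nonempty)
    (hirr : ∀ F G : Set α, IsClosed F → IsClosed G → Z ⊆ F ∪ G → Z ⊆ F ∨ Z ⊆ G)
    {ι : Type*} (s : Finset ι) (F : ι → Set α) (hF : ∀ a, IsClosed (F a))
    (hcov : Z ⊆ ⋃ a ∈ s, F a) : ∃ a ∈ s, Z ⊆ F a := by
  classical
  induction s using Finset.induction_on with
  | empty => simp only [Finset.notMem_empty, Set.iUnion_of_empty, Set.iUnion_empty,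
      Set.subset_empty_iff] at hcov; exact absurd hcov (Set.nonempty_iff_ne_empty.mp hZne)
  | @insert b s hb ih =>
    rw [show (⋃ a ∈ insert b s, F a) = F b ∪ ⋃ a ∈ s, F a from Finset.set_biUnion_insert _ _ _] at hcov
    rcases hirr _ _ (hF b) (Set.Finite.isClosed_biUnion s.finite_toSet fun a _ => hF a) hcov with
      h | h
    · exact ⟨b, Finset.mem_insert_self b s, h⟩
    · obtain ⟨a, ha, h⟩ := ih h
      exact ⟨a, Finset.mem_insert_of_mem ha, h⟩

end Generic


set_option maxHeartbeats 2000000 in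
set_option synthInstance.maxHeartbeats 400000 in
open Cardinal in
/-- Core lemma: a countable family of polynomials not in a prime ideal can be simultaneously
avoided by a point of the zero locus, over an uncountable algebraically closed field. -/
theorem exists_point [IsAlgClosed k] [Uncountable k] [Finite σ]
    (I : Ideal (MvPolynomial σ k)) (hI : I.IsPrime) (g : ℕ → MvPolynomial σ k)
    (hg : ∀ i, g i ∉ I) :
    ∃ x : σ → k, (∀ p ∈ I, eval x p = 0) ∧ (∀ i, eval x (g i) ≠ 0) := by
  classical
  haveI := hI
  haveI := Fintype.ofFinite σ
  haveI : IsDomain (MvPolynomial σ k ⧸ I) := Ideal.Quotient.isDomain I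
  let S : Submonoid (MvPolynomial σ k ⧸ I) :=
    Submonoid.closure (Set.range fun i => Ideal.Quotient.mk I (g i))
  have hSne : ∀ s ∈ S, s ≠ 0 := by
    intro s hs
    induction hs using Submonoid.closure_induction with
    | mem x hx =>
      obtain ⟨i, rfl⟩ := hx
      exact fun h => hg i (Ideal.Quotient.eq_zero_iff_mem.mp h)
    | one => exact one_ne_zero
    | mul x y _ _ hx hy => exact mul_ne_zero hx hy
  have hSle : S ≤ nonZeroDivisors (MvPolynomial σ k ⧸ I) :=
    fun s hs => mem_nonZeroDivisors_of_ne_zero (hSne s hs)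
  haveI : IsDomain (Localization S) := IsLocalization.isDomain_localization hSle
  obtain ⟨m, hm⟩ := Ideal.exists_maximal (Localization S)
  haveI := hm
  haveI : m.IsTwoSided := ⟨fun b ha => mul_comm b _ ▸ m.smul_mem _ ha⟩
  letI : Field (Localization S ⧸ m) := @Ideal.Quotient.field (Localization S) inferInstance m hm
  let Ψ' : (MvPolynomial σ k ⧸ I) →+* (Localization S ⧸ m) :=
    (Ideal.Quotient.mk m).comp (algebraMap (MvPolynomial σ k ⧸ I) (Localization S))
  let Ψ : MvPolynomial σ k →+* (Localization S ⧸ m) := Ψ'.comp (Ideal.Quotient.mk I)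
  have hunit : ∀ s : MvPolynomial σ k ⧸ I, s ∈ S → IsUnit (Ψ' s) := fun s hs =>
    (IsLocalization.map_units (Localization S) (⟨s, hs⟩ : S)).map (Ideal.Quotient.mk m)
  let ΨA : MvPolynomial σ k →ₐ[k] (Localization S ⧸ m) := { Ψ with commutes' := fun c => rfl }
  let T : Set (Localization S ⧸ m) :=
    (Set.range fun j => Ψ (X j)) ∪ (Set.range fun i => (Ψ (g i))⁻¹)
  have hTc : T.Countable := (Set.countable_range _).union (Set.countable_range _)
  have hRB : ∀ r : MvPolynomial σ k ⧸ I, Ψ' r ∈ Algebra.adjoin k T := by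
    intro r
    obtain ⟨p, rfl⟩ := Ideal.Quotient.mk_surjective r
    have hp : p ∈ Algebra.adjoin k (Set.range (X : σ → MvPolynomial σ k)) := by
      rw [MvPolynomial.adjoin_range_X]; trivial
    have h2 : ΨA p ∈ (Algebra.adjoin k (Set.range (X : σ → MvPolynomial σ k))).map ΨA :=
      ⟨p, hp, rfl⟩
    rw [AlgHom.map_adjoin] at h2
    refine Algebra.adjoin_mono ?_ h2
    rintro _ ⟨_, ⟨j, rfl⟩, rfl⟩
    exact Or.inl ⟨j, rfl⟩
  have hSB : ∀ s : MvPolynomial σ k ⧸ I, s ∈ S → (Ψ' s)⁻¹ ∈ Algebra.adjoin k T := by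
    intro s hs
    induction hs using Submonoid.closure_induction with
    | mem x hx =>
      obtain ⟨i, rfl⟩ := hx
      exact Algebra.subset_adjoin (Or.inr ⟨i, rfl⟩)
    | one => rw [map_one, inv_one]; exact Subalgebra.one_mem _
    | mul x y _ _ hx hy =>
      rw [map_mul, mul_inv]
      exact mul_mem hx hy
  have hB : ∀ u : Localization S ⧸ m, u ∈ Algebra.adjoin k T := by
    intro u
    obtain ⟨a, rfl⟩ := Ideal.Quotient.mk_surjective u
    obtain ⟨⟨r, s⟩, hrs⟩ := IsLocalization.surj (M := S) (S := Localization S) a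
    have h1 : (Ideal.Quotient.mk m a) * Ψ' s = Ψ' r := by
      show Ideal.Quotient.mk m a * Ideal.Quotient.mk m (algebraMap _ _ (s : MvPolynomial σ k ⧸ I))
          = Ideal.Quotient.mk m (algebraMap _ _ r)
      rw [← map_mul, hrs]
    have h2 : Ψ' (s : MvPolynomial σ k ⧸ I) ≠ 0 := (hunit s s.2).ne_zero
    have h3 : Ideal.Quotient.mk m a = Ψ' r * (Ψ' s)⁻¹ := by
      rw [mul_comm, eq_inv_mul_iff_mul_eq₀ h2, mul_comm]
      exact h1
    rw [h3]
    exact mul_mem (hRB r) (hSB s s.2)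
  have hrank : Module.rank k (Localization S ⧸ m) ≤ Cardinal.aleph0 := by
    set Mon : Set (Localization S ⧸ m) :=
      (SetLike.coe (Submonoid.closure T : Submonoid (Localization S ⧸ m))) with hMon
    have htop : (⊤ : Submodule k (Localization S ⧸ m)) = Submodule.span k Mon := by
      rw [hMon, ← Algebra.adjoin_eq_span]
      have hadj : Algebra.adjoin k T = ⊤ := eq_top_iff.mpr fun u _ => hB u
      rw [hadj]
      rfl
    have hcnt : Mon.Countable := by
      rw [hMon, Submonoid.closure_eq_image_prod]
      haveI : Countable T := hTc.to_subtype
      have hsub : {l : List (Localization S ⧸ m) | ∀ x ∈ l, x ∈ T} ⊆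
          Set.range fun l : List T => l.map Subtype.val := by
        intro l hl
        induction l with
        | nil => exact ⟨[], rfl⟩
        | cons a l ih =>
          obtain ⟨l', hl'⟩ := ih fun x hx => hl x (List.mem_cons_of_mem a hx)
          exact ⟨⟨a, hl a List.mem_cons_self⟩ :: l', by simp [hl']⟩
      exact ((Set.countable_range _).mono hsub).image _
    calc Module.rank k (Localization S ⧸ m)
        = Module.rank k (⊤ : Submodule k (Localization S ⧸ m)) := (rank_top k _).symm
      _ = Module.rank k (Submodule.span k Mon) := by rw [htop]
      _ ≤ #Mon := rank_span_le _
      _ ≤ Cardinal.aleph0 := hcnt.le_aleph0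
  haveI halg : Algebra.IsAlgebraic k (Localization S ⧸ m) := by
    constructor
    intro t
    by_contra ht
    have hli := Transcendental.linearIndependent_sub_inv (F := k)
      (E := Localization S ⧸ m) ht
    have h1 := hli.cardinal_lift_le_rank
    have h3 := h1.trans (Cardinal.lift_le.mpr hrank)
    rw [Cardinal.lift_aleph0, Cardinal.lift_le_aleph0] at h3
    exact absurd h3 (Cardinal.aleph0_lt_mk (α := k)).not_ge
  haveI : Algebra.IsIntegral k (Localization S ⧸ m) := Algebra.IsAlgebraic.isIntegral
  have hsurj : Function.Surjective (algebraMap k (Localization S ⧸ m)) :=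
    IsAlgClosed.algebraMap_bijective_of_isIntegral.2
  have hinj : Function.Injective (algebraMap k (Localization S ⧸ m)) :=
    (algebraMap k (Localization S ⧸ m)).injective
  let e : k ≃+* (Localization S ⧸ m) :=
    RingEquiv.ofBijective (algebraMap k (Localization S ⧸ m)) ⟨hinj, hsurj⟩
  let Φ : MvPolynomial σ k →+* k := ((e.symm : (Localization S ⧸ m) ≃+* k) :
    (Localization S ⧸ m) →+* k).comp Ψ
  have hΦ : (eval (fun j => Φ (X j)) : MvPolynomial σ k →+* k) = Φ := by
    apply MvPolynomial.ringHom_ext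
    · intro c
      rw [eval_C]
      show c = e.symm (Ψ (MvPolynomial.C c))
      exact (e.symm_apply_apply c).symm
    · intro j
      rw [eval_X]
  have hΨI : ∀ p ∈ I, Ψ p = 0 := by
    intro p hp
    show Ψ' (Ideal.Quotient.mk I p) = 0
    rw [Ideal.Quotient.eq_zero_iff_mem.mpr hp, map_zero]
  have hΨg : ∀ i, Ψ (g i) ≠ 0 := fun i =>
    (hunit _ (Submonoid.subset_closure ⟨i, rfl⟩)).ne_zero
  refine ⟨fun j => Φ (X j), fun p hp => ?_, fun i => ?_⟩
  · have := congrArg (fun F : MvPolynomial σ k →+* k => F p) hΦ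
    rw [show eval (fun j => Φ (X j)) p = Φ p from this]
    show e.symm (Ψ p) = 0
    rw [hΨI p hp, map_zero]
  · have := congrArg (fun F : MvPolynomial σ k →+* k => F (g i)) hΦ
    rw [show eval (fun j => Φ (X j)) (g i) = Φ (g i) from this]
    intro h
    apply hΨg i
    have : e.symm (Ψ (g i)) = e.symm 0 := by rw [map_zero]; exact h
    exact e.symm.injective this

/-- **Key lemma**: over an uncountable algebraically closed field, a decreasing sequence of
nonempty constructible subsets of affine space has nonempty intersection. -/
theorem key [IsAlgClosed k] [Uncountable k] [Finite σ]
    (A : ℕ → Set (σ → k)) (hA : ∀ i, IsConstructibleIn (zariskiTop σ k) (A i))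
    (hne : ∀ i, (A i).Nonempty) (hdec : ∀ i, A (i+1) ⊆ A i) :
    (⋂ i, A i).Nonempty := by
  classical
  letI : TopologicalSpace (σ → k) := zariskiTop σ k
  have wf : WellFounded ((· > ·) : Ideal (MvPolynomial σ k) → Ideal (MvPolynomial σ k) → Prop) :=
    isNoetherian_iff.mp (by rw [← isNoetherianRing_iff]; infer_instance)
  let P : Ideal (MvPolynomial σ k) → Prop := fun J =>
    ∀ Z : Set (σ → k), IsClosed Z → vi Z = J →
      ∀ B : ℕ → Set (σ → k), (∀ i, IsConstructibleIn (zariskiTop σ k) (B i)) →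
        (∀ i, (B i).Nonempty) → (∀ i, B (i+1) ⊆ B i) → (∀ i, B i ⊆ Z) →
        (⋂ i, B i).Nonempty
  have step : ∀ J, (∀ J', J < J' → P J') → P J := by
    intro J IH Z hZcl hZJ B hBcon hBne hBdec hBZ
    obtain ⟨N, hN⟩ := stabilizes (fun i => cl (B i)) (fun i => isClosed_cl _)
      (fun i => cl_mono (hBdec i))
    by_cases hstab : cl (B N) = Z
    swap
    · -- the stable closure is strictly smaller : apply the inductive hypothesis
      have hsub : cl (B N) ⊆ Z := cl_min (hBZ N) hZcl
      have hlt : J < vi (cl (B N)) :=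
        hZJ ▸ vi_lt_of_closed_lt (isClosed_cl _) hZcl hsub hstab
      obtain ⟨x, hx⟩ := IH _ hlt (cl (B N)) (isClosed_cl _) rfl (fun i => B (N + i))
        (fun i => hBcon _) (fun i => hBne _) (fun i => hBdec _)
        (fun i => (antitone_of_succ hBdec (Nat.le_add_right N i)).trans (subset_cl _))
      rw [Set.mem_iInter] at hx
      exact ⟨x, Set.mem_iInter.mpr fun j =>
        antitone_of_succ hBdec (Nat.le_add_right j N) (by simpa [Nat.add_comm] using hx j)⟩
    · -- all closures equal `Z`
      have hclZ : ∀ i, cl (B i) = Z := by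
        intro i
        rcases le_or_gt N i with h | h
        · rw [hN i h, hstab]
        · refine Set.Subset.antisymm (cl_min (hBZ i) hZcl) ?_
          rw [← hstab]
          exact cl_mono (antitone_of_succ hBdec h.le)
      have hZne : Z.Nonempty := (hBne 0).mono (hBZ 0)
      by_cases hirr : ∀ F G : Set (σ → k), IsClosed F → IsClosed G → Z ⊆ F ∪ G →
          Z ⊆ F ∨ Z ⊆ G
      · -- Z irreducible: find a dense open inside each `B i` and apply `exists_point`
        have hprime : (vi (k := k) Z).IsPrime := by
          constructor
          · intro htop
            obtain ⟨x, hx⟩ := hZne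
            have h1 : (1 : MvPolynomial σ k) ∈ vi Z := htop ▸ Submodule.mem_top
            simpa using h1 x hx
          · intro p q hpq
            have hcov : Z ⊆ zl {p} ∪ zl {q} := by
              intro x hx
              have := hpq x hx
              rw [map_mul] at this
              rcases mul_eq_zero.mp this with h | h
              · exact Or.inl fun r hr => by rwa [Set.mem_singleton_iff.mp hr]
              · exact Or.inr fun r hr => by rwa [Set.mem_singleton_iff.mp hr]
            rcases hirr _ _ (isClosed_zl {p}) (isClosed_zl {q}) hcov with h | h
            · exact Or.inl fun x hx => h hx p rfl
            · exact Or.inr fun x hx => h hx q rfl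
        have hgi : ∀ i, ∃ p : MvPolynomial σ k, p ∉ vi Z ∧
            Z ∩ {y | eval y p ≠ 0} ⊆ B i := by
          intro i
          obtain ⟨Nc, U, Cc, hUC, hBeq⟩ := hBcon i
          have hcov : Z ⊆ ⋃ a ∈ (Finset.univ : Finset (Fin Nc)), cl (U a ∩ Cc a) := by
            have h1 : B i ⊆ ⋃ a ∈ (Finset.univ : Finset (Fin Nc)), cl (U a ∩ Cc a) := by
              rw [hBeq]
              intro x hx
              obtain ⟨a, ha⟩ := Set.mem_iUnion.mp hx
              exact Set.mem_biUnion (Finset.mem_univ a) (subset_cl _ ha)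
            have hclosed : IsClosed (⋃ a ∈ (Finset.univ : Finset (Fin Nc)), cl (U a ∩ Cc a)) :=
              Set.Finite.isClosed_biUnion (Finset.finite_toSet _) fun a _ => isClosed_cl _
            rw [← hclZ i]
            exact cl_min h1 hclosed
          obtain ⟨a, _, hZa⟩ := irr_cover hZne hirr Finset.univ _
            (fun a => isClosed_cl (U a ∩ Cc a)) hcov
          have hpiece_sub : U a ∩ Cc a ⊆ B i := by
            rw [hBeq]; exact Set.subset_iUnion (fun a => U a ∩ Cc a) a
          have hZC : Z ⊆ Cc a := hZa.trans (cl_min Set.inter_subset_right (hUC a).2)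
          have hpne : (U a ∩ Cc a).Nonempty := nonempty_of_cl (hZne.mono hZa)
          obtain ⟨x0, hx0⟩ := hpne
          obtain ⟨p, hp0, hpsub⟩ := exists_basic (hUC a).1 x0 hx0.1
          refine ⟨p, fun hmem => hp0 (hmem x0 (hBZ i (hpiece_sub hx0))), fun y hy =>
            hpiece_sub ⟨hpsub hy.2, hZC hy.1⟩⟩
        choose g hg1 hg2 using hgi
        obtain ⟨x, hx1, hx2⟩ := exists_point (vi Z) hprime g hg1
        have hxZ : x ∈ Z := by
          rw [← zl_vi_of_closed hZcl]
          exact fun p hp => hx1 p hp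
        exact ⟨x, Set.mem_iInter.mpr fun i => hg2 i ⟨hxZ, hx2 i⟩⟩
      · -- Z reducible
        push_neg at hirr
        obtain ⟨F, G, hFcl, hGcl, hcov, hZF, hZG⟩ := hirr
        have hZ1cl : IsClosed (Z ∩ F) := IsClosed.inter hZcl hFcl
        have hZ2cl : IsClosed (Z ∩ G) := IsClosed.inter hZcl hGcl
        have hZ1ne : Z ∩ F ≠ Z := fun h => hZF (h ▸ Set.inter_subset_right)
        have hZ2ne : Z ∩ G ≠ Z := fun h => hZG (h ▸ Set.inter_subset_right)
        have hlt1 : J < vi (Z ∩ F) :=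
          hZJ ▸ vi_lt_of_closed_lt hZ1cl hZcl Set.inter_subset_left hZ1ne
        have hlt2 : J < vi (Z ∩ G) :=
          hZJ ▸ vi_lt_of_closed_lt hZ2cl hZcl Set.inter_subset_left hZ2ne
        obtain ⟨M, hM⟩ := stabilizes (fun i => cl (B i ∩ (Z ∩ F))) (fun i => isClosed_cl _)
          (fun i => cl_mono (Set.inter_subset_inter_left _ (hBdec i)))
        by_cases hY : (B M ∩ (Z ∩ F)).Nonempty
        · have hne' : ∀ i, (B (M + i) ∩ (Z ∩ F)).Nonempty := fun i => by
            apply nonempty_of_cl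
            rw [hM (M + i) (Nat.le_add_right M i)]
            exact hY.mono (subset_cl _)
          obtain ⟨x, hx⟩ := IH _ hlt1 (Z ∩ F) hZ1cl rfl (fun i => B (M + i) ∩ (Z ∩ F))
            (fun i => constr_inter_closed (hBcon _) hZ1cl) hne'
            (fun i => Set.inter_subset_inter_left _ (hBdec _))
            (fun i => Set.inter_subset_right)
          rw [Set.mem_iInter] at hx
          exact ⟨x, Set.mem_iInter.mpr fun j =>
            antitone_of_succ hBdec (Nat.le_add_right j M)
              (by simpa [Nat.add_comm] using (hx j).1)⟩
        · have hBM : B M ∩ (Z ∩ F) = ∅ := Set.not_nonempty_iff_eq_empty.mp hY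
          have hBZ2 : ∀ i, B (M + i) ⊆ Z ∩ G := by
            intro i x hx
            have hxZ : x ∈ Z := hBZ _ hx
            rcases hcov hxZ with hF | hG
            · exfalso
              have : x ∈ B M ∩ (Z ∩ F) :=
                ⟨antitone_of_succ hBdec (Nat.le_add_right M i) hx, hxZ, hF⟩
              rw [hBM] at this
              exact this
            · exact ⟨hxZ, hG⟩
          obtain ⟨x, hx⟩ := IH _ hlt2 (Z ∩ G) hZ2cl rfl (fun i => B (M + i))
            (fun i => hBcon _) (fun i => hBne _) (fun i => hBdec _) hBZ2
          rw [Set.mem_iInter] at hx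
          exact ⟨x, Set.mem_iInter.mpr fun j =>
            antitone_of_succ hBdec (Nat.le_add_right j M)
              (by simpa [Nat.add_comm] using hx j)⟩
  have hall : ∀ J, P J := fun J => wf.induction J step
  exact hall (vi (cl (A 0))) (cl (A 0)) (isClosed_cl _) rfl A hA hne hdec
    (fun i => (antitone_of_succ hdec (Nat.zero_le i)).trans (subset_cl _))

lemma res_trunc {n : ℕ} (m : ℕ) (x : Fin n × ℕ → k) :
    res k m (truncAt k (m+1) x) = truncAt k m x := rfl

lemma isClosed_fiber {n m : ℕ} (z : Fin n × Fin (m+1) → k) :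
    @IsClosed _ (zariskiTop (Fin n × Fin (m+2)) k) {w | res k m w = z} := by
  have heq : {w : Fin n × Fin (m+2) → k | res k m w = z} =
      zl (Set.range fun q : Fin n × Fin (m+1) =>
        (X (q.1, q.2.castSucc) : MvPolynomial (Fin n × Fin (m+2)) k) - MvPolynomial.C (z q)) := by
    ext w
    simp only [Set.mem_setOf_eq, zl, Set.forall_mem_range]
    constructor
    · intro h q
      rw [map_sub, eval_X, eval_C, sub_eq_zero]
      exact congrFun h q
    · intro h
      funext q
      have := h q
      rw [map_sub, eval_X, eval_C, sub_eq_zero] at this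
      exact this
  rw [heq]
  exact isClosed_zl _

lemma coeff_aeval_agree {K : Type*} [CommRing K] {n : ℕ} (s t : Fin n → PowerSeries K)
    (m : ℕ) (h : ∀ a : Fin n, ∀ j, j ≤ m → PowerSeries.coeff j (s a) = PowerSeries.coeff j (t a))
    (p : MvPolynomial (Fin n) K) :
    ∀ j, j ≤ m → PowerSeries.coeff j (aeval s p) = PowerSeries.coeff j (aeval t p) := by
  induction p using MvPolynomial.induction_on with
  | C c => intro j _; rw [aeval_C, aeval_C]
  | add p q hp hq => intro j hj; rw [map_add, map_add, map_add, map_add, hp j hj, hq j hj]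
  | mul_X p a hp =>
    intro j hj
    rw [show (aeval s) (p * X a) = aeval s p * s a by rw [map_mul, aeval_X],
      show (aeval t) (p * X a) = aeval t p * t a by rw [map_mul, aeval_X],
      PowerSeries.coeff_mul, PowerSeries.coeff_mul]
    apply Finset.sum_congr rfl
    intro q hq
    rw [Finset.HasAntidiagonal.mem_antidiagonal] at hq
    rw [hp q.1 (le_trans (by omega) hj), h a q.2 (by omega)]

end ArcAux

open ArcAux in
/-- If `k` is an uncountable algebraically closed field and
`X = V(f₁,…,f_r) ⊆ 𝔸ⁿ` is such that the image in `J_m(X)` of every cylinder is constructible,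
then every decreasing sequence `C₁ ⊇ C₂ ⊇ ⋯` of nonempty cylinders in `J_∞(X)` has nonempty
intersection. -/
theorem statement_12 (k : Type*) [Field k] [IsAlgClosed k] [Uncountable k]
    (n r : ℕ) (f : Fin r → MvPolynomial (Fin n) k)
    (hconstr : ∀ C, IsCylinder k f C → ∀ m : ℕ,
      IsConstructibleIn (zariskiTop (Fin n × Fin (m + 1)) k) (truncAt k m '' C))
    (C : ℕ → Set (Fin n × ℕ → k))
    (hcyl : ∀ i, IsCylinder k f (C i))
    (hne : ∀ i, (C i).Nonempty)
    (hdec : ∀ i, C (i + 1) ⊆ C i) :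
    (⋂ i, C i).Nonempty := by
  classical
  have himg : ∀ i m, IsConstructibleIn (zariskiTop (Fin n × Fin (m + 1)) k)
      (truncAt k m '' C i) := fun i m => hconstr (C i) (hcyl i) m
  -- level 0
  have h0 : (⋂ i, truncAt k 0 '' C i).Nonempty :=
    key _ (fun i => himg i 0) (fun i => (hne i).image _)
      (fun i => Set.image_mono (hdec i))
  -- the inductive step
  have hstep : ∀ m (w : Fin n × Fin (m + 1) → k), (∀ i, w ∈ truncAt k m '' C i) →
      ∃ w' : Fin n × Fin (m + 2) → k,
        (∀ i, w' ∈ truncAt k (m + 1) '' C i) ∧ res k m w' = w := by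
    intro m w hw
    have hkey := key (σ := Fin n × Fin (m + 2))
      (fun i => truncAt k (m + 1) '' C i ∩ {w' | res k m w' = w})
      (fun i => @constr_inter_closed _ (zariskiTop _ k) _ _ (himg i (m + 1)) (isClosed_fiber w))
      (fun i => by
        obtain ⟨y, hyC, hyw⟩ := hw i
        exact ⟨truncAt k (m + 1) y, ⟨y, hyC, rfl⟩, by rw [Set.mem_setOf_eq, res_trunc, hyw]⟩)
      (fun i => Set.inter_subset_inter_left _ (Set.image_mono (hdec i)))
    obtain ⟨w', hw'⟩ := hkey
    rw [Set.mem_iInter] at hw'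
    exact ⟨w', fun i => (hw' i).1, (hw' 0).2⟩
  -- build the chain of jets
  obtain ⟨w0, hw0⟩ := h0
  rw [Set.mem_iInter] at hw0
  let M : ℕ → Type _ := fun m => {w : Fin n × Fin (m + 1) → k // ∀ i, w ∈ truncAt k m '' C i}
  let F : ∀ m, M m → M (m + 1) := fun m w =>
    ⟨Classical.choose (hstep m w.1 w.2), (Classical.choose_spec (hstep m w.1 w.2)).1⟩
  let seq : ∀ m, M m := natChain (⟨w0, hw0⟩ : M 0) F
  have hseq_succ : ∀ m, seq (m + 1) = F m (seq m) := fun m => rfl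
  have hcompat : ∀ m, res k m (seq (m + 1)).1 = (seq m).1 := by
    intro m
    rw [hseq_succ m]
    exact (Classical.choose_spec (hstep m (seq m).1 (seq m).2)).2
  -- assemble the arc
  let x : Fin n × ℕ → k := fun p => (seq p.2).1 (p.1, Fin.last p.2)
  have haux : ∀ (a : Fin n) (m : ℕ) (j : ℕ) (h : j < m + 1),
      (seq m).1 (a, ⟨j, h⟩) = x (a, j) := by
    intro a m
    induction m with
    | zero =>
      intro j h
      have hj : j = 0 := by omega
      subst hj
      rfl
    | succ m ih =>
      intro j h
      rcases Nat.lt_or_ge j (m + 1) with h' | h'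
      · have h1 : (⟨j, h⟩ : Fin (m + 2)) = (⟨j, h'⟩ : Fin (m + 1)).castSucc := by
          apply Fin.ext; rfl
        rw [h1]
        have h2 : (seq (m + 1)).1 (a, (⟨j, h'⟩ : Fin (m + 1)).castSucc) =
            res k m (seq (m + 1)).1 (a, ⟨j, h'⟩) := rfl
        rw [h2, hcompat m]
        exact ih j h'
      · have hj : j = m + 1 := by omega
        subst hj
        have h1 : (⟨m + 1, h⟩ : Fin (m + 2)) = Fin.last (m + 1) := by
          apply Fin.ext; rfl
        rw [h1]
  have htr : ∀ m, truncAt k m x = (seq m).1 := by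
    intro m
    funext p
    obtain ⟨a, j⟩ := p
    show x (a, (j : ℕ)) = (seq m).1 (a, j)
    rw [← haux a m j j.isLt]
  refine ⟨x, Set.mem_iInter.mpr fun i => ?_⟩
  obtain ⟨mi, Si, _, hCeq⟩ := hcyl i
  have hximg : ∀ m, truncAt k m x ∈ truncAt k m '' C i := fun m => (htr m) ▸ (seq m).2 i
  rw [hCeq]
  constructor
  · -- x is an arc on X
    intro l
    apply PowerSeries.ext
    intro j
    obtain ⟨y, hyC, hyx⟩ := hximg j
    have hyarc : y ∈ arcSol k f := by
      have := hCeq ▸ hyC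
      exact this.1
    have hagree : ∀ a : Fin n, ∀ j', j' ≤ j →
        PowerSeries.coeff j' (PowerSeries.mk fun jj => x (a, jj)) =
        PowerSeries.coeff j' (PowerSeries.mk fun jj => y (a, jj)) := by
      intro a j' hj'
      rw [PowerSeries.coeff_mk, PowerSeries.coeff_mk]
      have := congrFun hyx (a, (⟨j', Nat.lt_succ_of_le hj'⟩ : Fin (j + 1)))
      exact this.symm
    have := coeff_aeval_agree _ _ j hagree (f l) j le_rfl
    rw [this, hyarc l]
  · -- x satisfies the cylinder condition at level mi
    show truncAt k mi x ∈ Si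
    obtain ⟨y, hyC, hyx⟩ := hximg mi
    have hyS : truncAt k mi y ∈ Si := (hCeq ▸ hyC).2
    rwa [hyx] at hyS
end

section
/- Let X be a scheme of finite type over k and let p ≤ m ≤ 2p+1. If γ ∈ J_p(X) is a p-jet, based at x ∈ X, whose fiber π_{m,p}^{-1}(γ) in J_m(X) is nonempty, then π_{m,p}^{-1}(γ) is a torsor under, and (after choosing a base point) isomorphic to, Hom_{k[t]/(t^{p+1})}(γ*Ω_X, (t^{p+1})/(t^{m+1})). -/
/-!
Two lifts of `γ` to `k[t]/(t^{m+1})` differ by a map `R → (t^{p+1})`, the kernel of the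
truncation. Since `m ≤ 2p+1`, this ideal squares to zero, so for a `k`-linear `D` with values in
it the product `(δ₀ + D) x * (δ₀ + D) y` loses its `D x * D y` term: `δ₀ + D` is multiplicative
exactly when `D` satisfies the Leibniz rule twisted by `δ₀`.
-/

open Polynomial

section SquareZero

variable {k A B C : Type*} [CommRing k] [CommRing A] [CommRing B] [CommRing C]
  [Algebra k A] [Algebra k B] [Algebra k C]

theorem AlgHom.comp_eq_comp_iff_sub_mem_ker (f : B →ₐ[k] C) (δ δ₀ : A →ₐ[k] B) :
    f.comp δ = f.comp δ₀ ↔ ∀ x, δ x - δ₀ x ∈ RingHom.ker f := by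
  simp [AlgHom.ext_iff, sub_eq_zero]

variable {I : Ideal B}

theorem Ideal.mul_eq_zero_of_sq_eq_bot (hI : I ^ 2 = ⊥) {a b : B} (ha : a ∈ I) (hb : b ∈ I) :
    a * b = 0 :=
  (pow_two I ▸ hI).le (Ideal.mul_mem_mul ha hb)

def addDerivationOfSqZero (hI : I ^ 2 = ⊥) (δ₀ : A →ₐ[k] B) (D : A →ₗ[k] B) (hDI : ∀ x, D x ∈ I)
    (hD : ∀ x y, D (x * y) = δ₀ x * D y + δ₀ y * D x) : A →ₐ[k] B :=
  AlgHom.ofLinearMap (δ₀.toLinearMap + D) (by simpa using hD 1 1) fun x y => by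
    simp only [LinearMap.add_apply, AlgHom.toLinearMap_apply, map_mul, hD x y]
    linear_combination -I.mul_eq_zero_of_sq_eq_bot hI (hDI x) (hDI y)

@[simp]
theorem addDerivationOfSqZero_apply (hI : I ^ 2 = ⊥) (δ₀ : A →ₐ[k] B) (D : A →ₗ[k] B)
    (hDI : ∀ x, D x ∈ I) (hD : ∀ x y, D (x * y) = δ₀ x * D y + δ₀ y * D x) (x : A) :
    addDerivationOfSqZero hI δ₀ D hDI hD x = δ₀ x + D x :=
  rfl

def algHomsModSqZeroEquivDerivations (hI : I ^ 2 = ⊥) (δ₀ : A →ₐ[k] B) :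
    {δ : A →ₐ[k] B // ∀ x, δ x - δ₀ x ∈ I} ≃
      {D : A →ₗ[k] B // (∀ x, D x ∈ I) ∧ ∀ x y, D (x * y) = δ₀ x * D y + δ₀ y * D x} where
  toFun δ := ⟨δ.1.toLinearMap - δ₀.toLinearMap, δ.2, fun x y => by
    simp only [LinearMap.sub_apply, AlgHom.toLinearMap_apply, map_mul]
    linear_combination I.mul_eq_zero_of_sq_eq_bot hI (δ.2 x) (δ.2 y)⟩
  invFun D := ⟨addDerivationOfSqZero hI δ₀ D.1 D.2.1 D.2.2, fun x => by simpa using D.2.1 x⟩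
  left_inv δ := by ext; simp
  right_inv D := by ext; simp

end SquareZero

section Truncation

variable (k A : Type*) [CommRing k] [CommRing A] [Algebra k A] {p m : ℕ}

theorem ker_truncTrunc (hpm : p ≤ m) :
    RingHom.ker (truncTrunc k A hpm) =
      Ideal.span {Ideal.Quotient.mk _ ((X : A[X]) ^ (p + 1))} := by
  ext z
  obtain ⟨f, rfl⟩ := Ideal.Quotient.mk_surjective z
  change Ideal.Quotient.mk _ f = 0 ↔ _
  rw [Ideal.Quotient.eq_zero_iff_mem, Ideal.mem_span_singleton, Ideal.mem_span_singleton]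
  constructor
  · rintro ⟨c, rfl⟩
    exact ⟨Ideal.Quotient.mk _ c, map_mul _ _ _⟩
  · rintro ⟨c, hc⟩
    obtain ⟨c, rfl⟩ := Ideal.Quotient.mk_surjective c
    rw [← map_mul, Ideal.Quotient.eq, Ideal.mem_span_singleton] at hc
    have hX : (X : A[X]) ^ (p + 1) ∣ X ^ (m + 1) := pow_dvd_pow _ (by omega)
    simpa using (hX.trans hc).add (dvd_mul_right (X ^ (p + 1)) c)

theorem span_X_pow_sq_eq_bot (hm : m ≤ 2 * p + 1) :
    Ideal.span {(Ideal.Quotient.mk _ ((X : A[X]) ^ (p + 1)) : TruncPoly A m)} ^ 2 = ⊥ := by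
  rw [Ideal.span_singleton_pow, Ideal.span_singleton_eq_bot, ← map_pow,
    Ideal.Quotient.eq_zero_iff_mem, Ideal.mem_span_singleton, ← pow_mul]
  exact pow_dvd_pow _ (by omega)

end Truncation

theorem statement_14_general (k R : Type*) [Field k] [CommRing R] [Algebra k R]
    (p m : ℕ) (hpm : p ≤ m) (hm : m ≤ 2 * p + 1)
    (γ : R →ₐ[k] TruncPoly k p)
    (δ0 : R →ₐ[k] TruncPoly k m) (h0 : (truncTrunc k k hpm).comp δ0 = γ) :
    ∃ e : {δ : R →ₐ[k] TruncPoly k m // (truncTrunc k k hpm).comp δ = γ} ≃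
        {D : R →ₗ[k] TruncPoly k m //
          (∀ x, D x ∈ Ideal.span
            {Ideal.Quotient.mk _ ((Polynomial.X : Polynomial k) ^ (p + 1))}) ∧
          ∀ x y, D (x * y) = δ0 x * D y + δ0 y * D x},
      ∀ δ x, ((e δ).1 : R →ₗ[k] TruncPoly k m) x = δ.1 x - δ0 x := by
  subst h0
  have hfiber (δ : R →ₐ[k] TruncPoly k m) :
      (truncTrunc k k hpm).comp δ = (truncTrunc k k hpm).comp δ0 ↔
        ∀ x, δ x - δ0 x ∈ Ideal.span {Ideal.Quotient.mk _ ((X : k[X]) ^ (p + 1))} := by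
    rw [AlgHom.comp_eq_comp_iff_sub_mem_ker, ker_truncTrunc]
  exact ⟨(Equiv.subtypeEquivRight hfiber).trans
    (algHomsModSqZeroEquivDerivations (span_X_pow_sq_eq_bot k hm) δ0), fun _ _ => rfl⟩

/-- (Affine model `X = Spec R`.)  Let `p ≤ m ≤ 2p+1` and let
`γ : R → k[t]/(t^{p+1})` be a `p`-jet whose fiber under `π_{m,p}` is nonempty, say containing
`δ₀`.  Then the fiber `π_{m,p}⁻¹(γ)` is a torsor under
`Hom_{k[t]/(t^{p+1})}(γ*Ω_X, (t^{p+1})/(t^{m+1}))`, which is identified with the module of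
`k`-linear maps `D : R → k[t]/(t^{m+1})` taking values in the ideal `(t^{p+1})` and satisfying
the Leibniz rule twisted by `δ₀`; the bijection sends `δ` to `δ - δ₀`. -/
theorem statement_14 (k R : Type*) [Field k] [CommRing R] [Algebra k R]
    [Algebra.FiniteType k R] (p m : ℕ) (hpm : p ≤ m) (hm : m ≤ 2 * p + 1)
    (γ : R →ₐ[k] TruncPoly k p)
    (δ0 : R →ₐ[k] TruncPoly k m) (h0 : (truncTrunc k k hpm).comp δ0 = γ) :
    ∃ e : {δ : R →ₐ[k] TruncPoly k m // (truncTrunc k k hpm).comp δ = γ} ≃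
        {D : R →ₗ[k] TruncPoly k m //
          (∀ x, D x ∈ Ideal.span
            {Ideal.Quotient.mk _ ((Polynomial.X : Polynomial k) ^ (p + 1))}) ∧
          ∀ x y, D (x * y) = δ0 x * D y + δ0 y * D x},
      ∀ δ x, ((e δ).1 : R →ₗ[k] TruncPoly k m) x = δ.1 x - δ0 x :=
  statement_14_general k R p m hpm hm γ δ0 h0
end

section
/- Let M ⊂ 𝔸^N be a complete intersection defined by a regular sequence F_1,…,F_r, and let e ≥ 0 and m ≥ e. If u ∈ J_m(M) satisfies ord_u(Jac_M) = e (so that, after reordering coordinates, the r×r minor on the first r columns of the Jacobian J(ũ) has order exactly e, with R* its classical adjoint), then u lifts to an arc in J_∞(M) if and only if u lifts to J_{m+e}(M), and this holds if and only if ord(R*(ũ)·F(ũ)) ≥ m+e+1, where ũ is the degree-≤ m lift of u to k[[t]]^N. -/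
open MvPolynomial Polynomial

noncomputable def coeAH (K : Type*) [CommSemiring K] : Polynomial K →ₐ[K] PowerSeries K :=
  { Polynomial.coeToPowerSeries.ringHom with
    commutes' := fun r => by
      simp [Polynomial.coeToPowerSeries.ringHom_apply, Polynomial.algebraMap_apply,
        PowerSeries.algebraMap_apply] }

@[simp] lemma coeAH_apply {K : Type*} [CommSemiring K] (p : Polynomial K) :
    coeAH K p = (p : PowerSeries K) := rfl

lemma coe_X_pow_dvd_iff {K : Type*} [CommSemiring K] (n : ℕ) (p : Polynomial K) :
    (Polynomial.X : Polynomial K) ^ n ∣ p ↔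
      (PowerSeries.X : PowerSeries K) ^ n ∣ (p : PowerSeries K) := by
  rw [Polynomial.X_pow_dvd_iff, PowerSeries.X_pow_dvd_iff]
  simp [Polynomial.coeff_coe]

lemma aeval_sub_dvd_s16 {R A : Type*} [CommSemiring R] [CommRing A] [Algebra R A] {σ : Type*}
    (x : A) (a b : σ → A) (h : ∀ i, x ∣ a i - b i) (F : MvPolynomial σ R) :
    x ∣ MvPolynomial.aeval a F - MvPolynomial.aeval b F := by
  induction F using MvPolynomial.induction_on with
  | C c => simp
  | add p q hp hq =>
      convert dvd_add hp hq using 1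
      simp only [map_add]; ring
  | mul_X p i hp =>
      simp only [map_mul, MvPolynomial.aeval_X]
      convert dvd_add (hp.mul_right (a i)) ((h i).mul_left (MvPolynomial.aeval b p)) using 1
      ring

-- first-order Taylor
lemma aeval_taylor {R A : Type*} [CommRing R] [CommRing A] [Algebra R A] {n : ℕ}
    (x : A) (a b : Fin n → A) (h : ∀ i, x ∣ a i - b i) (F : MvPolynomial (Fin n) R) :
    x ^ 2 ∣ MvPolynomial.aeval a F - MvPolynomial.aeval b F
      - ∑ i, MvPolynomial.aeval b (MvPolynomial.pderiv i F) * (a i - b i) := by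
  induction F using MvPolynomial.induction_on with
  | C c => simp
  | add p q hp hq =>
      convert dvd_add hp hq using 1
      simp only [map_add, add_mul, Finset.sum_add_distrib]; ring
  | mul_X p i hp =>
      have hXd : ∀ j : Fin n, MvPolynomial.aeval b (MvPolynomial.pderiv j (MvPolynomial.X i) :
          MvPolynomial (Fin n) R) = if j = i then 1 else 0 := by
        intro j
        rw [MvPolynomial.pderiv_X]
        by_cases hji : j = i
        · subst hji; simp
        · simp [Pi.single_apply, hji, eq_comm]
      have hterm : ∀ j : Fin n, MvPolynomial.aeval b (MvPolynomial.pderiv j (p * MvPolynomial.X i))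
          = MvPolynomial.aeval b (MvPolynomial.pderiv j p) * b i
            + (if j = i then MvPolynomial.aeval b p else 0) := by
        intro j
        simp only [MvPolynomial.pderiv_mul, map_add, map_mul, MvPolynomial.aeval_X, hXd j]
        split_ifs <;> simp [mul_comm]
      have hsum : ∑ j, MvPolynomial.aeval b (MvPolynomial.pderiv j (p * MvPolynomial.X i))
            * (a j - b j)
          = (∑ j, MvPolynomial.aeval b (MvPolynomial.pderiv j p) * (a j - b j)) * b i
            + MvPolynomial.aeval b p * (a i - b i) := by
        simp only [hterm, add_mul, Finset.sum_add_distrib, ite_mul, zero_mul]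
        rw [Finset.sum_ite_eq' Finset.univ i (fun j => MvPolynomial.aeval b p * (a j - b j))]
        simp only [Finset.mem_univ, if_true]
        rw [Finset.sum_mul]
        congr 1
        exact Finset.sum_congr rfl fun j _ => by ring
      have hSd : x ^ 2 ∣ (∑ j, MvPolynomial.aeval b (MvPolynomial.pderiv j p) * (a j - b j))
          * (a i - b i) := by
        rw [Finset.sum_mul]
        refine Finset.dvd_sum fun j _ => ?_
        have h2 : x * x ∣ (a j - b j) * (a i - b i) := mul_dvd_mul (h j) (h i)
        rw [pow_two]
        exact Dvd.dvd.trans h2 ⟨MvPolynomial.aeval b (MvPolynomial.pderiv j p), by ring⟩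
      simp only [map_mul, MvPolynomial.aeval_X, hsum]
      convert dvd_add (hp.mul_right (a i)) hSd using 1
      ring


-- determinant congruence
lemma det_sub_dvd {A : Type*} [CommRing A] {n : Type*} [DecidableEq n] [Fintype n] (x : A)
    (M₁ M₂ : Matrix n n A) (h : ∀ i j, x ∣ M₁ i j - M₂ i j) :
    x ∣ M₁.det - M₂.det := by
  classical
  set I := Ideal.span {x}
  have hmap : (Ideal.Quotient.mk I).mapMatrix M₁ = (Ideal.Quotient.mk I).mapMatrix M₂ := by
    ext i j
    simp only [RingHom.mapMatrix_apply, Matrix.map_apply]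
    exact Ideal.Quotient.eq.mpr (Ideal.mem_span_singleton.mpr (h i j))
  have hdet := congrArg Matrix.det hmap
  rw [← RingHom.map_det, ← RingHom.map_det] at hdet
  exact Ideal.mem_span_singleton.mp (Ideal.Quotient.eq.mp hdet)


-- adjugate-times-column is a minor
lemma adj_mulVec_col_dvd {A : Type*} [CommRing A] {r N : ℕ} (hrN : r ≤ N) (x : A)
    (J : Fin r → Fin N → A)
    (h : ∀ c : Fin r → Fin N, x ∣ (Matrix.of fun i j : Fin r => J i (c j)).det)
    (c₀ : Fin N) (i : Fin r) :
    x ∣ Matrix.mulVec (Matrix.of fun i j : Fin r => J i (Fin.castLE hrN j)).adjugate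
      (fun l => J l c₀) i := by
  rw [← Matrix.cramer_eq_adjugate_mulVec, Matrix.cramer_apply]
  have heq : (Matrix.of fun p q : Fin r => J p (Fin.castLE hrN q)).updateCol i
        (fun l => J l c₀)
      = Matrix.of fun p q => J p (if q = i then c₀ else Fin.castLE hrN q) := by
    ext p q
    rw [Matrix.updateCol_apply]
    by_cases hq : q = i <;> simp [hq]
  rw [heq]
  exact h _

section
variable {k : Type*} [Field k] {N r e m : ℕ}

lemma jac_entry_coe (hrN : r ≤ N)
    (F : Fin r → MvPolynomial (Fin N) k) (u : Fin N → Polynomial k)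
    (p : MvPolynomial (Fin N) k) :
    MvPolynomial.aeval (fun i => ((u i : PowerSeries k))) p
      = ((MvPolynomial.aeval u p : Polynomial k) : PowerSeries k) := by
  exact (MvPolynomial.comp_aeval_apply (f := u) (coeAH k) p).symm

lemma det_unit_of_close (hrN : r ≤ N) (hem : e ≤ m)
    (F : Fin r → MvPolynomial (Fin N) k) (u : Fin N → Polynomial k)
    (hminors : ∀ c : Fin r → Fin N, (Polynomial.X : Polynomial k) ^ e ∣
      Matrix.det (Matrix.of fun i j : Fin r =>
        MvPolynomial.aeval u (MvPolynomial.pderiv (c j) (F i))))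
    (hexact : ¬ ((Polynomial.X : Polynomial k) ^ (e + 1) ∣
      Matrix.det (Matrix.of fun i j : Fin r =>
        MvPolynomial.aeval u (MvPolynomial.pderiv (Fin.castLE hrN j) (F i)))))
    (w : Fin N → PowerSeries k)
    (hw : ∀ i, (PowerSeries.X : PowerSeries k) ^ (m + 1) ∣ w i - (u i : PowerSeries k)) :
    ∃ δ : PowerSeries k, IsUnit δ ∧
      (Matrix.of fun i j : Fin r =>
        MvPolynomial.aeval w (MvPolynomial.pderiv (Fin.castLE hrN j) (F i))).det
        = (PowerSeries.X : PowerSeries k) ^ e * δ := by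
  classical
  set Mpoly : Matrix (Fin r) (Fin r) (Polynomial k) := Matrix.of fun i j =>
    MvPolynomial.aeval u (MvPolynomial.pderiv (Fin.castLE hrN j) (F i)) with hMpoly
  set Mw : Matrix (Fin r) (Fin r) (PowerSeries k) := Matrix.of fun i j =>
    MvPolynomial.aeval w (MvPolynomial.pderiv (Fin.castLE hrN j) (F i)) with hMw
  set Mu : Matrix (Fin r) (Fin r) (PowerSeries k) := Matrix.of fun i j =>
    MvPolynomial.aeval (fun i => ((u i : PowerSeries k)))
      (MvPolynomial.pderiv (Fin.castLE hrN j) (F i)) with hMu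
  have hmm : (coeAH k).mapMatrix Mpoly = Mu := by
    ext i j
    simp only [AlgHom.mapMatrix_apply, Matrix.map_apply, hMpoly, hMu, Matrix.of_apply]
    rw [jac_entry_coe hrN F u]
    rfl
  have hMu_det : Mu.det = ((Mpoly.det : Polynomial k) : PowerSeries k) := by
    rw [← hmm, ← AlgHom.map_det]
    rfl
  have hdiff : (PowerSeries.X : PowerSeries k) ^ (m + 1) ∣ Mw.det - Mu.det := by
    apply det_sub_dvd
    intro i j
    exact aeval_sub_dvd_s16 _ _ _ hw _
  have hXe : (PowerSeries.X : PowerSeries k) ^ e ∣ Mw.det := by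
    have h1 : (PowerSeries.X : PowerSeries k) ^ e ∣ Mu.det := by
      rw [hMu_det, ← coe_X_pow_dvd_iff]
      exact hminors _
    have h2 : (PowerSeries.X : PowerSeries k) ^ e ∣ Mw.det - Mu.det :=
      (pow_dvd_pow _ (by omega)).trans hdiff
    simpa using dvd_add h2 h1
  have hne : ¬ (PowerSeries.X : PowerSeries k) ^ (e + 1) ∣ Mw.det := by
    intro hcon
    apply hexact
    rw [coe_X_pow_dvd_iff, ← hMu_det]
    have h2 : (PowerSeries.X : PowerSeries k) ^ (e + 1) ∣ Mw.det - Mu.det :=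
      (pow_dvd_pow _ (by omega)).trans hdiff
    simpa using dvd_sub hcon h2
  obtain ⟨δ, hδ⟩ := hXe
  refine ⟨δ, ?_, hδ⟩
  rw [PowerSeries.isUnit_iff_constantCoeff, isUnit_iff_ne_zero]
  intro h0
  apply hne
  rw [hδ, pow_succ]
  exact mul_dvd_mul_left _ (PowerSeries.X_dvd_iff.mpr h0)

lemma core_step (hrN : r ≤ N)
    (F : Fin r → MvPolynomial (Fin N) k)
    (w : Fin N → PowerSeries k)
    (hdet : ∃ δ : PowerSeries k, IsUnit δ ∧
      (Matrix.of fun i j : Fin r =>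
        MvPolynomial.aeval w (MvPolynomial.pderiv (Fin.castLE hrN j) (F i))).det
        = (PowerSeries.X : PowerSeries k) ^ e * δ)
    (K : ℕ) (heK : e ≤ K)
    (hadj : ∀ i, (PowerSeries.X : PowerSeries k) ^ K ∣
      Matrix.mulVec (Matrix.of fun i j : Fin r =>
        MvPolynomial.aeval w (MvPolynomial.pderiv (Fin.castLE hrN j) (F i))).adjugate
        (fun l => MvPolynomial.aeval w (F l)) i) :
    ∃ w' : Fin N → PowerSeries k,
      (∀ i, (PowerSeries.X : PowerSeries k) ^ (K - e) ∣ w' i - w i) ∧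
      ∀ l, (PowerSeries.X : PowerSeries k) ^ (2 * (K - e)) ∣ MvPolynomial.aeval w' (F l) := by
  classical
  obtain ⟨δ, hδu, hδ⟩ := hdet
  obtain ⟨δi, hδi⟩ := hδu.exists_right_inv
  set A : Matrix (Fin r) (Fin r) (PowerSeries k) := Matrix.of fun i j =>
    MvPolynomial.aeval w (MvPolynomial.pderiv (Fin.castLE hrN j) (F i)) with hA
  set Fw : Fin r → PowerSeries k := fun l => MvPolynomial.aeval w (F l) with hFw
  choose g hg using hadj
  -- key identity
  have hkey : ∀ l, (PowerSeries.X : PowerSeries k) ^ (K - e) * Matrix.mulVec A g l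
      = δ * Fw l := by
    intro l
    have h1 : Matrix.mulVec A (Matrix.mulVec A.adjugate Fw) = A.det • Fw := by
      rw [Matrix.mulVec_mulVec, Matrix.mul_adjugate, Matrix.smul_mulVec,
        Matrix.one_mulVec]
    have h2 : (Matrix.mulVec A.adjugate Fw) = (PowerSeries.X : PowerSeries k) ^ K • g := by
      funext i
      simpa [smul_eq_mul] using hg i
    have h3 : (PowerSeries.X : PowerSeries k) ^ K • Matrix.mulVec A g = A.det • Fw := by
      rw [← Matrix.mulVec_smul, ← h2, h1]
    have h4 := congrFun h3 l
    simp only [Pi.smul_apply, smul_eq_mul, hδ] at h4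
    have h5 : (PowerSeries.X : PowerSeries k) ^ e * ((PowerSeries.X : PowerSeries k) ^ (K - e)
        * Matrix.mulVec A g l) = (PowerSeries.X : PowerSeries k) ^ e * (δ * Fw l) := by
      rw [← mul_assoc, ← pow_add, Nat.add_sub_cancel' heK, h4]
      ring
    exact mul_left_cancel₀ (pow_ne_zero e PowerSeries.X_ne_zero) h5
  set V : Fin N → PowerSeries k :=
    fun i => if h : (i : ℕ) < r then -(δi * g ⟨i, h⟩) else 0 with hV
  have hVe : ∀ j : Fin r, V (Fin.castLE hrN j) = -(δi * g j) := by
    intro j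
    have hj : ((Fin.castLE hrN j : Fin N) : ℕ) < r := by simpa using j.isLt
    rw [hV]
    simp only [dif_pos hj]
    congr 1
  have hVz : ∀ i : Fin N, ¬ ((i : ℕ) < r) → V i = 0 := by
    intro i hi; rw [hV]; simp only [dif_neg hi]
  refine ⟨fun i => w i + (PowerSeries.X : PowerSeries k) ^ (K - e) * V i, ?_, ?_⟩
  · intro i
    exact ⟨V i, by ring⟩
  · intro l
    set w' : Fin N → PowerSeries k :=
      fun i => w i + (PowerSeries.X : PowerSeries k) ^ (K - e) * V i with hw'
    have hdvd : ∀ i, (PowerSeries.X : PowerSeries k) ^ (K - e) ∣ w' i - w i :=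
      fun i => ⟨V i, by rw [hw']; ring⟩
    have ht := aeval_taylor ((PowerSeries.X : PowerSeries k) ^ (K - e)) w' w hdvd (F l)
    have hsum : ∑ i, MvPolynomial.aeval w (MvPolynomial.pderiv i (F l)) * (w' i - w i)
        = - Fw l := by
      have hstep1 : ∀ i : Fin N, w' i - w i
          = (PowerSeries.X : PowerSeries k) ^ (K - e) * V i := by
        intro i; rw [hw']; ring
      simp only [hstep1]
      have hemb : ∑ i : Fin N, MvPolynomial.aeval w (MvPolynomial.pderiv i (F l))
            * ((PowerSeries.X : PowerSeries k) ^ (K - e) * V i)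
          = ∑ i ∈ Finset.univ.map ⟨Fin.castLE hrN, Fin.castLE_injective hrN⟩,
              MvPolynomial.aeval w (MvPolynomial.pderiv i (F l))
            * ((PowerSeries.X : PowerSeries k) ^ (K - e) * V i) := by
        symm
        apply Finset.sum_subset (Finset.subset_univ _)
        intro i _ hi
        have hir : ¬ ((i : ℕ) < r) := by
          intro hlt
          exact hi (Finset.mem_map.mpr ⟨⟨i, hlt⟩, Finset.mem_univ _, Fin.ext rfl⟩)
        rw [hVz i hir]
        ring
      rw [hemb, Finset.sum_map]
      simp only [Function.Embedding.coeFn_mk]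
      have hterm : ∀ j : Fin r, MvPolynomial.aeval w (MvPolynomial.pderiv (Fin.castLE hrN j) (F l))
            * ((PowerSeries.X : PowerSeries k) ^ (K - e) * V (Fin.castLE hrN j))
          = -(δi * ((PowerSeries.X : PowerSeries k) ^ (K - e) * (A l j * g j))) := by
        intro j
        rw [hVe j, hA]
        simp only [Matrix.of_apply]
        ring
      rw [Finset.sum_congr rfl (fun j _ => hterm j)]
      have hstep2 : ∑ j : Fin r, -(δi * ((PowerSeries.X : PowerSeries k) ^ (K - e)
            * (A l j * g j)))
          = -(δi * ((PowerSeries.X : PowerSeries k) ^ (K - e)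
            * ∑ j : Fin r, A l j * g j)) := by
        rw [Finset.mul_sum, Finset.mul_sum, Finset.sum_neg_distrib]
      rw [hstep2]
      have hAg : ∑ j : Fin r, A l j * g j = Matrix.mulVec A g l := rfl
      rw [hAg, hkey l, ← mul_assoc, mul_comm δi δ, hδi, one_mul]
    rw [hsum] at ht
    have hfin : MvPolynomial.aeval w' (F l)
        = (MvPolynomial.aeval w' (F l) - MvPolynomial.aeval w (F l) - - Fw l) := by
      rw [hFw]; ring
    rw [hw'] at hfin ⊢
    rw [hfin]
    have hpow : ((PowerSeries.X : PowerSeries k) ^ (K - e)) ^ 2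
        = (PowerSeries.X : PowerSeries k) ^ (2 * (K - e)) := by
      rw [← pow_mul, Nat.mul_comm]
    rw [← hpow]
    exact ht


lemma aeval_coe (v : Fin N → Polynomial k) (p : MvPolynomial (Fin N) k) :
    MvPolynomial.aeval (fun i => ((v i : PowerSeries k))) p
      = ((MvPolynomial.aeval v p : Polynomial k) : PowerSeries k) :=
  (MvPolynomial.comp_aeval_apply (f := v) (coeAH k) p).symm

lemma coeff_eq_of_dvd {a j : ℕ} {f g : PowerSeries k}
    (h : (PowerSeries.X : PowerSeries k) ^ a ∣ f - g) (hj : j < a) :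
    PowerSeries.coeff j f = PowerSeries.coeff j g := by
  rw [PowerSeries.X_pow_dvd_iff] at h
  have := h j hj
  rw [map_sub, sub_eq_zero] at this
  exact this

lemma coeff_match_iff (m : ℕ) (u : Polynomial k) (W : PowerSeries k) :
    (∀ j ≤ m, PowerSeries.coeff j W = u.coeff j) ↔
      (PowerSeries.X : PowerSeries k) ^ (m + 1) ∣ W - (u : PowerSeries k) := by
  rw [PowerSeries.X_pow_dvd_iff]
  constructor
  · intro h j hj
    rw [map_sub, Polynomial.coeff_coe, h j (by omega), sub_self]
  · intro h j hj
    have := h j (by omega)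
    rw [map_sub, Polynomial.coeff_coe, sub_eq_zero] at this
    exact this

lemma cond2'_to_cond2 (F : Fin r → MvPolynomial (Fin N) k) (u : Fin N → Polynomial k)
    (W : Fin N → PowerSeries k)
    (hw : ∀ i, (PowerSeries.X : PowerSeries k) ^ (m + 1) ∣ W i - (u i : PowerSeries k))
    (hF : ∀ l, (PowerSeries.X : PowerSeries k) ^ (m + e + 1) ∣ MvPolynomial.aeval W (F l)) :
    ∃ w : Fin N → Polynomial k,
      (∀ i, ∀ j ≤ m, (w i).coeff j = (u i).coeff j) ∧
      ∀ l, (Polynomial.X : Polynomial k) ^ (m + e + 1) ∣ MvPolynomial.aeval w (F l) := by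
  refine ⟨fun i => PowerSeries.trunc (m + e + 1) (W i), ?_, ?_⟩
  · intro i j hj
    rw [PowerSeries.coeff_trunc, if_pos (by omega)]
    exact (coeff_match_iff m (u i) (W i)).mpr (hw i) j hj
  · intro l
    rw [coe_X_pow_dvd_iff, ← aeval_coe]
    have hdiff : ∀ i, (PowerSeries.X : PowerSeries k) ^ (m + e + 1) ∣
        ((PowerSeries.trunc (m + e + 1) (W i) : Polynomial k) : PowerSeries k) - W i := by
      intro i
      rw [PowerSeries.X_pow_dvd_iff]
      intro j hj
      rw [map_sub, Polynomial.coeff_coe, PowerSeries.coeff_trunc, if_pos hj, sub_self]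
    have h1 := aeval_sub_dvd_s16 ((PowerSeries.X : PowerSeries k) ^ (m + e + 1))
      (fun i => ((PowerSeries.trunc (m + e + 1) (W i) : Polynomial k) : PowerSeries k))
      W hdiff (F l)
    simpa using dvd_add h1 (hF l)

lemma adj_mulVec_coe (hrN : r ≤ N) (F : Fin r → MvPolynomial (Fin N) k)
    (u : Fin N → Polynomial k) (i : Fin r) :
    Matrix.mulVec (Matrix.adjugate (Matrix.of fun i j : Fin r =>
        MvPolynomial.aeval (fun i => ((u i : PowerSeries k)))
          (MvPolynomial.pderiv (Fin.castLE hrN j) (F i))))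
      (fun l => MvPolynomial.aeval (fun i => ((u i : PowerSeries k))) (F l)) i
    = ((Matrix.mulVec (Matrix.adjugate (Matrix.of fun i j : Fin r =>
        MvPolynomial.aeval u (MvPolynomial.pderiv (Fin.castLE hrN j) (F i))))
      (fun l => MvPolynomial.aeval u (F l)) i : Polynomial k) : PowerSeries k) := by
  have hmm : (coeAH k).mapMatrix (Matrix.of fun i j : Fin r =>
      MvPolynomial.aeval u (MvPolynomial.pderiv (Fin.castLE hrN j) (F i)))
      = Matrix.of fun i j : Fin r => MvPolynomial.aeval (fun i => ((u i : PowerSeries k)))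
          (MvPolynomial.pderiv (Fin.castLE hrN j) (F i)) := by
    refine Matrix.ext fun a b => ?_
    simp only [AlgHom.mapMatrix_apply, Matrix.map_apply, Matrix.of_apply]
    exact (aeval_coe u _).symm
  rw [← hmm, ← AlgHom.map_adjugate]
  rw [show (fun l => MvPolynomial.aeval (fun i => ((u i : PowerSeries k))) (F l))
      = fun l => coeAH k (MvPolynomial.aeval u (F l)) from funext fun l => by rw [aeval_coe, coeAH_apply]]
  simp only [Matrix.mulVec, dotProduct, AlgHom.mapMatrix_apply, Matrix.map_apply,
    ← map_mul, ← map_sum]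
  rfl


lemma cond3_to_cond2' (hrN : r ≤ N) (hem : e ≤ m)
    (F : Fin r → MvPolynomial (Fin N) k) (u : Fin N → Polynomial k)
    (hminors : ∀ c : Fin r → Fin N, (Polynomial.X : Polynomial k) ^ e ∣
      Matrix.det (Matrix.of fun i j : Fin r =>
        MvPolynomial.aeval u (MvPolynomial.pderiv (c j) (F i))))
    (hexact : ¬ ((Polynomial.X : Polynomial k) ^ (e + 1) ∣
      Matrix.det (Matrix.of fun i j : Fin r =>
        MvPolynomial.aeval u (MvPolynomial.pderiv (Fin.castLE hrN j) (F i)))))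
    (h3 : ∀ i, (Polynomial.X : Polynomial k) ^ (m + e + 1) ∣
      Matrix.mulVec (Matrix.adjugate (Matrix.of fun i j : Fin r =>
        MvPolynomial.aeval u (MvPolynomial.pderiv (Fin.castLE hrN j) (F i))))
        (fun l => MvPolynomial.aeval u (F l)) i) :
    ∃ W : Fin N → PowerSeries k,
      (∀ i, (PowerSeries.X : PowerSeries k) ^ (m + 1) ∣ W i - (u i : PowerSeries k)) ∧
      ∀ l, (PowerSeries.X : PowerSeries k) ^ (m + e + 1) ∣ MvPolynomial.aeval W (F l) := by
  have hdet := det_unit_of_close hrN hem F u hminors hexact (fun i => (u i : PowerSeries k))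
    (fun i => by simpa using dvd_zero ((PowerSeries.X : PowerSeries k) ^ (m + 1)))
  have hadj : ∀ i, (PowerSeries.X : PowerSeries k) ^ (m + e + 1) ∣
      Matrix.mulVec (Matrix.adjugate (Matrix.of fun i j : Fin r =>
        MvPolynomial.aeval (fun i => ((u i : PowerSeries k)))
          (MvPolynomial.pderiv (Fin.castLE hrN j) (F i))))
        (fun l => MvPolynomial.aeval (fun i => ((u i : PowerSeries k))) (F l)) i := by
    intro i
    rw [adj_mulVec_coe hrN F u i, ← coe_X_pow_dvd_iff]
    exact h3 i
  obtain ⟨w', hw1, hw2⟩ := core_step hrN F _ hdet (m + e + 1) (by omega) hadj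
  have hsub : m + e + 1 - e = m + 1 := by omega
  refine ⟨w', fun i => ?_, fun l => ?_⟩
  · have := hw1 i; rwa [hsub] at this
  · exact (pow_dvd_pow _ (by omega : m + e + 1 ≤ 2 * (m + e + 1 - e))).trans (hw2 l)

lemma cond2'_to_cond1 (hrN : r ≤ N) (hem : e ≤ m)
    (F : Fin r → MvPolynomial (Fin N) k) (u : Fin N → Polynomial k)
    (hminors : ∀ c : Fin r → Fin N, (Polynomial.X : Polynomial k) ^ e ∣
      Matrix.det (Matrix.of fun i j : Fin r =>
        MvPolynomial.aeval u (MvPolynomial.pderiv (c j) (F i))))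
    (hexact : ¬ ((Polynomial.X : Polynomial k) ^ (e + 1) ∣
      Matrix.det (Matrix.of fun i j : Fin r =>
        MvPolynomial.aeval u (MvPolynomial.pderiv (Fin.castLE hrN j) (F i)))))
    (W0 : Fin N → PowerSeries k)
    (hW0 : ∀ i, (PowerSeries.X : PowerSeries k) ^ (m + 1) ∣ W0 i - (u i : PowerSeries k))
    (hF0 : ∀ l, (PowerSeries.X : PowerSeries k) ^ (m + e + 1) ∣ MvPolynomial.aeval W0 (F l)) :
    ∃ W : Fin N → PowerSeries k,
      (∀ i, (PowerSeries.X : PowerSeries k) ^ (m + 1) ∣ W i - (u i : PowerSeries k)) ∧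
      ∀ l, MvPolynomial.aeval W (F l) = 0 := by
  classical
  set Good : ℕ → (Fin N → PowerSeries k) → Prop := fun s w =>
    (∀ i, (PowerSeries.X : PowerSeries k) ^ (m + 1) ∣ w i - (u i : PowerSeries k)) ∧
    (∀ l, (PowerSeries.X : PowerSeries k) ^ (m + e + 1 + s) ∣ MvPolynomial.aeval w (F l))
    with hGoodDef
  have key : ∀ s (w : Fin N → PowerSeries k), Good s w →
      ∃ w', (∀ i, (PowerSeries.X : PowerSeries k) ^ (m + 1 + s) ∣ w' i - w i) ∧
        Good (s + 1) w' := by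
    intro s w hgood
    obtain ⟨hw, hFw⟩ := hgood
    have hdet := det_unit_of_close hrN hem F u hminors hexact w hw
    have hadj : ∀ i, (PowerSeries.X : PowerSeries k) ^ (m + e + 1 + s) ∣
        Matrix.mulVec (Matrix.adjugate (Matrix.of fun i j : Fin r =>
          MvPolynomial.aeval w (MvPolynomial.pderiv (Fin.castLE hrN j) (F i))))
          (fun l => MvPolynomial.aeval w (F l)) i := by
      intro i
      simp only [Matrix.mulVec, dotProduct]
      exact Finset.dvd_sum fun l _ => (hFw l).mul_left _
    obtain ⟨w', h1, h2⟩ := core_step hrN F w hdet (m + e + 1 + s) (by omega) hadj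
    have hsub : m + e + 1 + s - e = m + 1 + s := by omega
    rw [hsub] at h1
    refine ⟨w', h1, ?_, ?_⟩
    · intro i
      have d1 : (PowerSeries.X : PowerSeries k) ^ (m + 1) ∣ w' i - w i :=
        (pow_dvd_pow _ (by omega)).trans (h1 i)
      have := dvd_add d1 (hw i)
      simpa using this
    · intro l
      rw [hsub] at h2
      exact (pow_dvd_pow _ (by omega : m + e + 1 + (s + 1) ≤ 2 * (m + 1 + s))).trans (h2 l)
  let seq : ∀ s : ℕ, {w : Fin N → PowerSeries k // Good s w} := fun s =>
    Nat.rec (motive := fun s => {w : Fin N → PowerSeries k // Good s w})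
      ⟨W0, hW0, hF0⟩
      (fun s p => ⟨(key s p.1 p.2).choose, ((key s p.1 p.2).choose_spec).2⟩) s
  have hstep : ∀ s i, (PowerSeries.X : PowerSeries k) ^ (m + 1 + s) ∣
      (seq (s + 1)).1 i - (seq s).1 i :=
    fun s => ((key s (seq s).1 (seq s).2).choose_spec).1
  have hchain : ∀ s t, s ≤ t → ∀ i, (PowerSeries.X : PowerSeries k) ^ (m + 1 + s) ∣
      (seq t).1 i - (seq s).1 i := by
    intro s t hst
    induction t, hst using Nat.le_induction with
    | base => intro i; simpa using dvd_zero ((PowerSeries.X : PowerSeries k) ^ (m + 1 + s))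
    | succ t hst ih =>
        intro i
        have d1 : (PowerSeries.X : PowerSeries k) ^ (m + 1 + s) ∣
            (seq (t + 1)).1 i - (seq t).1 i :=
          (pow_dvd_pow _ (by omega)).trans (hstep t i)
        have := dvd_add d1 (ih i)
        simpa using this
  set W : Fin N → PowerSeries k := fun i => PowerSeries.mk fun j =>
    PowerSeries.coeff j ((seq j).1 i) with hWdef
  have hlim : ∀ L i, (PowerSeries.X : PowerSeries k) ^ (m + 1 + L) ∣ W i - (seq L).1 i := by
    intro L i
    rw [PowerSeries.X_pow_dvd_iff]
    intro j hj
    rw [map_sub, sub_eq_zero, hWdef]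
    simp only [PowerSeries.coeff_mk]
    rcases le_total j L with h | h
    · exact (coeff_eq_of_dvd (hchain j L h i) (by omega)).symm
    · exact coeff_eq_of_dvd (hchain L j h i) (by omega)
  refine ⟨W, ?_, ?_⟩
  · intro i
    have d1 : (PowerSeries.X : PowerSeries k) ^ (m + 1) ∣ W i - (seq 0).1 i := by
      have := hlim 0 i
      simpa using this
    have d2 : (PowerSeries.X : PowerSeries k) ^ (m + 1) ∣ (seq 0).1 i - ↑(u i) :=
      (seq 0).2.1 i
    have := dvd_add d1 d2
    simpa using this
  · intro l
    apply PowerSeries.ext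
    intro j
    rw [map_zero]
    have d1 : (PowerSeries.X : PowerSeries k) ^ (m + 1 + j) ∣
        MvPolynomial.aeval W (F l) - MvPolynomial.aeval (seq j).1 (F l) :=
      aeval_sub_dvd_s16 _ _ _ (hlim j) (F l)
    have d2 : (PowerSeries.X : PowerSeries k) ^ (m + e + 1 + j) ∣
        MvPolynomial.aeval (seq j).1 (F l) := (seq j).2.2 l
    rw [coeff_eq_of_dvd d1 (by omega)]
    rw [PowerSeries.X_pow_dvd_iff] at d2
    exact d2 j (by omega)

lemma cond2_to_cond3 (hrN : r ≤ N) (hem : e ≤ m)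
    (F : Fin r → MvPolynomial (Fin N) k) (u : Fin N → Polynomial k)
    (hminors : ∀ c : Fin r → Fin N, (Polynomial.X : Polynomial k) ^ e ∣
      Matrix.det (Matrix.of fun i j : Fin r =>
        MvPolynomial.aeval u (MvPolynomial.pderiv (c j) (F i))))
    (w : Fin N → Polynomial k)
    (hmatch : ∀ i, ∀ j ≤ m, (w i).coeff j = (u i).coeff j)
    (hFw : ∀ l, (Polynomial.X : Polynomial k) ^ (m + e + 1) ∣ MvPolynomial.aeval w (F l))
    (i : Fin r) :
    (Polynomial.X : Polynomial k) ^ (m + e + 1) ∣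
      Matrix.mulVec (Matrix.adjugate (Matrix.of fun i j : Fin r =>
        MvPolynomial.aeval u (MvPolynomial.pderiv (Fin.castLE hrN j) (F i))))
        (fun l => MvPolynomial.aeval u (F l)) i := by
  classical
  have hd : ∀ c, (Polynomial.X : Polynomial k) ^ (m + 1) ∣ w c - u c := by
    intro c
    rw [Polynomial.X_pow_dvd_iff]
    intro j hj
    rw [Polynomial.coeff_sub, hmatch c j (by omega), sub_self]
  set A := Matrix.adjugate (Matrix.of fun i j : Fin r =>
      MvPolynomial.aeval u (MvPolynomial.pderiv (Fin.castLE hrN j) (F i))) with hA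
  set E : Fin r → Polynomial k := fun l =>
    MvPolynomial.aeval w (F l) - MvPolynomial.aeval u (F l)
      - ∑ c, MvPolynomial.aeval u (MvPolynomial.pderiv c (F l)) * (w c - u c) with hE
  have hEd : ∀ l, ((Polynomial.X : Polynomial k) ^ (m + 1)) ^ 2 ∣ E l :=
    fun l => aeval_taylor _ w u hd (F l)
  have hFu : ∀ l, MvPolynomial.aeval u (F l) = MvPolynomial.aeval w (F l)
      - (∑ c, MvPolynomial.aeval u (MvPolynomial.pderiv c (F l)) * (w c - u c)) - E l := by
    intro l; rw [hE]; ring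
  have step1 : ∑ l, A i l * MvPolynomial.aeval u (F l)
      = ∑ l, A i l * MvPolynomial.aeval w (F l)
        - ∑ l, A i l * (∑ c, MvPolynomial.aeval u (MvPolynomial.pderiv c (F l)) * (w c - u c))
        - ∑ l, A i l * E l := by
    rw [← Finset.sum_sub_distrib, ← Finset.sum_sub_distrib]
    apply Finset.sum_congr rfl
    intro l _
    rw [hFu l]; ring
  have step2 : ∑ l, A i l * (∑ c, MvPolynomial.aeval u (MvPolynomial.pderiv c (F l))
        * (w c - u c))
      = ∑ c, (w c - u c) * (∑ l, A i l * MvPolynomial.aeval u (MvPolynomial.pderiv c (F l))) := by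
    simp only [Finset.mul_sum]
    rw [Finset.sum_comm]
    apply Finset.sum_congr rfl
    intro c _
    apply Finset.sum_congr rfl
    intro l _
    ring
  have hgoal : Matrix.mulVec A (fun l => MvPolynomial.aeval u (F l)) i
      = ∑ l, A i l * MvPolynomial.aeval u (F l) := rfl
  rw [hgoal, step1, step2]
  refine dvd_sub (dvd_sub ?_ ?_) ?_
  · exact Finset.dvd_sum fun l _ => (hFw l).mul_left _
  · refine Finset.dvd_sum fun c _ => ?_
    have h1 : (Polynomial.X : Polynomial k) ^ (m + 1) ∣ w c - u c := hd c
    have h2 : (Polynomial.X : Polynomial k) ^ e ∣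
        ∑ l, A i l * MvPolynomial.aeval u (MvPolynomial.pderiv c (F l)) := by
      have h := adj_mulVec_col_dvd hrN ((Polynomial.X : Polynomial k) ^ e)
        (fun l c => MvPolynomial.aeval u (MvPolynomial.pderiv c (F l)))
        (fun c' => hminors c') c i
      exact h
    have h3 : (Polynomial.X : Polynomial k) ^ (m + e + 1)
        = (Polynomial.X : Polynomial k) ^ (m + 1) * (Polynomial.X : Polynomial k) ^ e := by
      rw [← pow_add]; congr 1; omega
    rw [h3]
    exact mul_dvd_mul h1 h2
  · refine Finset.dvd_sum fun l _ => Dvd.dvd.mul_left ?_ _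
    have h4 := hEd l
    rw [← pow_mul] at h4
    exact (pow_dvd_pow _ (by omega : m + e + 1 ≤ (m + 1) * 2)).trans h4

end


/-- Let `M ⊂ 𝔸^N` be a complete intersection defined by a regular sequence
`F₁,…,F_r`, let `e ≥ 0` and `m ≥ e`.  Let `u ∈ J_m(M)` (represented by its degree `≤ m` lift
`ũ ∈ k[t]^N`) with `ord_u(Jac_M) = e`, such that (after reordering coordinates) the `r×r`
minor on the first `r` columns of the Jacobian `J(ũ)` has order exactly `e`, with classical
adjoint `R*`.  Then `u` lifts to an arc in `J_∞(M)` iff it lifts to `J_{m+e}(M)`, iff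
`ord(R*(ũ)·F(ũ)) ≥ m + e + 1`. -/
theorem statement_16 (k : Type*) [Field k] [IsAlgClosed k]
    (N r e m : ℕ) (hrN : r ≤ N) (hem : e ≤ m)
    (F : Fin r → MvPolynomial (Fin N) k)
    (hreg : RingTheory.Sequence.IsRegular (MvPolynomial (Fin N) k) (List.ofFn F))
    (u : Fin N → Polynomial k) (hdeg : ∀ i, (u i).degree ≤ m)
    (hjet : ∀ l, (Polynomial.X : Polynomial k) ^ (m + 1) ∣ MvPolynomial.aeval u (F l))
    (hminors : ∀ c : Fin r → Fin N, (Polynomial.X : Polynomial k) ^ e ∣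
      Matrix.det (Matrix.of fun i j : Fin r =>
        MvPolynomial.aeval u (MvPolynomial.pderiv (c j) (F i))))
    (hexact : ¬ ((Polynomial.X : Polynomial k) ^ (e + 1) ∣
      Matrix.det (Matrix.of fun i j : Fin r =>
        MvPolynomial.aeval u (MvPolynomial.pderiv (Fin.castLE hrN j) (F i))))) :
    ((∃ w : Fin N → PowerSeries k,
        (∀ i, ∀ j ≤ m, PowerSeries.coeff j (w i) = (u i).coeff j) ∧
        ∀ l, MvPolynomial.aeval w (F l) = 0) ↔
      (∃ w : Fin N → Polynomial k,
        (∀ i, ∀ j ≤ m, (w i).coeff j = (u i).coeff j) ∧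
        ∀ l, (Polynomial.X : Polynomial k) ^ (m + e + 1) ∣ MvPolynomial.aeval w (F l))) ∧
    ((∃ w : Fin N → Polynomial k,
        (∀ i, ∀ j ≤ m, (w i).coeff j = (u i).coeff j) ∧
        ∀ l, (Polynomial.X : Polynomial k) ^ (m + e + 1) ∣ MvPolynomial.aeval w (F l)) ↔
      ∀ i, (Polynomial.X : Polynomial k) ^ (m + e + 1) ∣
        (Matrix.mulVec
          (Matrix.adjugate (Matrix.of fun i j : Fin r =>
            MvPolynomial.aeval u (MvPolynomial.pderiv (Fin.castLE hrN j) (F i))))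
          (fun l => MvPolynomial.aeval u (F l))) i) := by
  constructor
  · constructor
    · rintro ⟨w, hmatch, hsol⟩
      apply cond2'_to_cond2 F u w
      · intro i
        exact (coeff_match_iff m (u i) (w i)).mp (hmatch i)
      · intro l
        rw [hsol l]
        exact dvd_zero _
    · rintro ⟨w, hmatch, hdvd⟩
      have hW0 : ∀ i, (PowerSeries.X : PowerSeries k) ^ (m + 1) ∣
          ((w i : PowerSeries k)) - (u i : PowerSeries k) :=
        fun i => (coeff_match_iff m (u i) _).mp (fun j hj => by
          rw [Polynomial.coeff_coe]; exact hmatch i j hj)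
      have hF0 : ∀ l, (PowerSeries.X : PowerSeries k) ^ (m + e + 1) ∣
          MvPolynomial.aeval (fun i => ((w i : PowerSeries k))) (F l) := by
        intro l
        rw [aeval_coe, ← coe_X_pow_dvd_iff]
        exact hdvd l
      obtain ⟨W, h1, h2⟩ := cond2'_to_cond1 hrN hem F u hminors hexact _ hW0 hF0
      exact ⟨W, fun i => (coeff_match_iff m (u i) (W i)).mpr (h1 i), h2⟩
  · constructor
    · rintro ⟨w, hmatch, hdvd⟩ i
      exact cond2_to_cond3 hrN hem F u hminors w hmatch hdvd i
    · intro h3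
      obtain ⟨W, hw, hF⟩ := cond3_to_cond2' hrN hem F u hminors hexact h3
      exact cond2'_to_cond2 F u W hw hF
end

section
/- Let f : X' → X be a proper birational morphism with X' nonsingular and X reduced of pure dimension, and let γ, γ' ∈ J_∞(X') be arcs with f_∞(γ) = f_∞(γ'). If γ does not lie in J_∞(V(Jac_f)) ∪ f_∞^{-1}(J_∞(X_sing)), then γ = γ'. -/
open AlgebraicGeometry CategoryTheory

universe u

/-!
The arc `γ` meets the open set `U`, so its generic point lands in `U`; as `U = f⁻¹ V` and
`f ∘ γ = f ∘ γ'`, so does the generic point of `γ'`. On `U` the morphism `f` is a monomorphism,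
hence `γ` and `γ'` agree on `Spec k((t))`. Two arcs over `X` agreeing on `Spec k((t))` coincide
by the valuative criterion of separatedness, applied to the proper morphism `f`.
-/

namespace AlgebraicGeometry

lemma Scheme.Hom.base_bot_mem_of_not_range_subset_compl {R : Type u} [CommRing R] [IsDomain R]
    {X : Scheme.{u}} (g : Spec (CommRingCat.of R) ⟶ X) (U : X.Opens)
    (h : ¬ Set.range g.base ⊆ (U : Set X)ᶜ) : g.base (⊥ : PrimeSpectrum R) ∈ U := by
  obtain ⟨_, ⟨x, rfl⟩, hxU⟩ : ∃ y ∈ Set.range g.base, y ∈ U := by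
    simpa [Set.subset_def] using h
  exact (((PrimeSpectrum.le_iff_specializes ⊥ x).mp bot_le).map
    g.base.hom.continuous).mem_open U.isOpen hxU

lemma Spec_map_algebraMap_fractionRing_base (R K : Type u) [CommRing R] [IsDomain R] [Field K]
    [Algebra R K] [IsFractionRing R K] (p : Spec (CommRingCat.of K)) :
    (Spec.map (CommRingCat.ofHom (algebraMap R K))).base p = (⊥ : PrimeSpectrum R) := by
  refine PrimeSpectrum.ext ?_
  change Ideal.comap (algebraMap R K) (p : PrimeSpectrum K).asIdeal = ⊥
  rw [@Ideal.eq_bot_of_prime _ _ _ (p : PrimeSpectrum K).isPrime,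
    Ideal.comap_bot_of_injective _ (IsFractionRing.injective R K)]

lemma IsSeparated.eq_of_comp_eq_of_fractionRing {X Y : Scheme.{u}} (f : X ⟶ Y) [IsSeparated f]
    (R K : Type u) [CommRing R] [IsDomain R] [ValuationRing R] [Field K] [Algebra R K]
    [IsFractionRing R K] (g g' : Spec (CommRingCat.of R) ⟶ X)
    (hK : Spec.map (CommRingCat.ofHom (algebraMap R K)) ≫ g =
      Spec.map (CommRingCat.ofHom (algebraMap R K)) ≫ g')
    (hf : g ≫ f = g' ≫ f) : g = g' := by
  let S : ValuativeCommSq f :=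
    { R := R, K := K, i₁ := Spec.map (CommRingCat.ofHom (algebraMap R K)) ≫ g, i₂ := g ≫ f,
      commSq := ⟨by rw [Category.assoc]⟩ }
  let l : S.commSq.LiftStruct := ⟨g, rfl, rfl⟩
  let l' : S.commSq.LiftStruct := ⟨g', hK.symm, hf.symm⟩
  exact congrArg CommSq.LiftStruct.l ((IsSeparated.valuativeCriterion f S).elim l l')

lemma eq_of_comp_eq_of_range_subset_preimage {X X' T : Scheme.{u}} (f : X' ⟶ X)
    (U : X'.Opens) (V : X.Opens) (hUV : U = f ⁻¹ᵁ V) [Mono (U.ι ≫ f)] (h h' : T ⟶ X')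
    (hf : h ≫ f = h' ≫ f) (hU : Set.range h.base ⊆ U) : h = h' := by
  have hU' : Set.range h'.base ⊆ U := by
    rintro _ ⟨t, rfl⟩
    have hV : (h ≫ f).base t ∈ V := by
      have := hU ⟨t, rfl⟩
      rwa [hUV] at this
    rw [hf] at hV
    rw [hUV]
    exact hV
  rw [← Scheme.Opens.range_ι U] at hU hU'
  rw [← IsOpenImmersion.lift_fac U.ι h hU, ← IsOpenImmersion.lift_fac U.ι h' hU']
  congr 1
  rw [← cancel_mono (U.ι ≫ f), ← Category.assoc, ← Category.assoc, IsOpenImmersion.lift_fac,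
    IsOpenImmersion.lift_fac, hf]

end AlgebraicGeometry

theorem statement_17_general (k : Type u) [Field k] (X X' : Scheme.{u}) (f : X' ⟶ X) [IsProper f]
    (U : X'.Opens) (V : X.Opens) (hUV : U = f ⁻¹ᵁ V)
    (himm : IsOpenImmersion (U.ι ≫ f))
    (γ γ' : Spec (CommRingCat.of (PowerSeries k)) ⟶ X')
    (hcomp : γ ≫ f = γ' ≫ f)
    (hγ : ¬ (Set.range γ.base ⊆ ((U : Set X'))ᶜ)) :
    γ = γ' := by
  have hgeneric : γ.base (⊥ : PrimeSpectrum (PowerSeries k)) ∈ U := γ.base_bot_mem_of_not_range_subset_compl U hγ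
  refine IsSeparated.eq_of_comp_eq_of_fractionRing f _ (LaurentSeries k) γ γ' ?_ hcomp
  refine eq_of_comp_eq_of_range_subset_preimage f U V hUV _ _
    (by simp only [Category.assoc, hcomp]) ?_
  rintro _ ⟨p, rfl⟩
  rw [Scheme.Hom.comp_apply, Spec_map_algebraMap_fractionRing_base]
  exact hgeneric

/-- Let `f : X' → X` be a proper birational morphism with `X'` nonsingular
and `X` reduced of pure dimension, and let `U = f⁻¹(X_reg) ∖ V(Jac_f)` — an open subset of
`X'` which is the preimage of an open subset of `X` and on which `f` is an isomorphism onto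
its (open) image.  If `γ, γ' ∈ J_∞(X')` are arcs with `f_∞(γ) = f_∞(γ')` and `γ` does not lie
in `J_∞(V(Jac_f)) ∪ f_∞⁻¹(J_∞(X_sing))` (i.e. `γ` does not factor through the closed
complement of `U`), then `γ = γ'`. -/
theorem statement_17 (k : Type u) [Field k] (X X' : Scheme.{u}) (f : X' ⟶ X) [IsProper f]
    [IsReduced X]
    (U : X'.Opens) (V : X.Opens) (hUV : U = f ⁻¹ᵁ V)
    (himm : IsOpenImmersion (U.ι ≫ f))
    (γ γ' : Spec (CommRingCat.of (PowerSeries k)) ⟶ X')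
    (hcomp : γ ≫ f = γ' ≫ f)
    (hγ : ¬ (Set.range γ.base ⊆ ((U : Set X'))ᶜ)) :
    γ = γ' :=
  statement_17_general k X X' f U V hUV himm γ γ' hcomp hγ
end

section
/- Let f : X' → X be a proper birational morphism with X' nonsingular and X reduced of pure dimension n, and let γ ∈ J_∞(X') with ord_γ(Jac_f) = e and ord_{f_∞(γ)}(Jac_X) = e'. Then the pullback module γ*Ω_{X'/X} is isomorphic to ⊕_{i=1}^n k[t]/(t^{a_i}) with Σ a_i = e and all a_i ≤ e, and the kernel of the map γ*(f*Ω_X) → γ*Ω_{X'} is isomorphic to ⊕_{i=1}^r k[t]/(t^{b_i}) with Σ b_i = e'. -/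
open PowerSeries


section EXP
variable {R : Type*} [CommRing R] {p q : ℕ}

noncomputable def minorForm (s : Fin p → Fin q) :
    (Fin q → R) [⋀^Fin p]→ₗ[R] R :=
  Matrix.detRowAlternating.compLinearMap (LinearMap.funLeft R R s)

lemma minorForm_apply (s : Fin p → Fin q) (x : Fin p → (Fin q → R)) :
    minorForm s x = Matrix.det (Matrix.of fun j i => x j (s i)) := rfl

lemma altSum_apply {α} (t : Finset α) (f : α → ((Fin q → R) [⋀^Fin p]→ₗ[R] R))
    (x : Fin p → (Fin q → R)) :
    (∑ s ∈ t, f s) x = ∑ s ∈ t, f s x := by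
  induction t using Finset.cons_induction with
  | empty => simp
  | cons a t ha ih => rw [Finset.sum_cons, Finset.sum_cons, AlternatingMap.add_apply, ih]

lemma alt_mem_minorSpan (A : (Fin q → R) [⋀^Fin p]→ₗ[R] R) (x : Fin p → (Fin q → R)) :
    A x ∈ Ideal.span {y : R | ∃ ri : Fin p → Fin q,
      y = Matrix.det (Matrix.of fun i j => x j (ri i))} := by
  classical
  set e := Pi.basisFun R (Fin q) with he
  have key : A = ∑ s ∈ Finset.univ.filter (fun s : Fin p → Fin q => StrictMono s),
      A (fun i => e (s i)) • (minorForm s : (Fin q → R) [⋀^Fin p]→ₗ[R] R) := by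
    apply Module.Basis.ext_alternating e
    intro v hv
    rw [altSum_apply]
    set S : Finset (Fin q) := Finset.image v Finset.univ with hS
    have hcard : S.card = p := by
      rw [hS, Finset.card_image_of_injective _ hv, Finset.card_univ, Fintype.card_fin]
    set s₀ : Fin p → Fin q := ⇑(S.orderEmbOfFin hcard) with hs₀
    have hs₀mono : StrictMono s₀ := (S.orderEmbOfFin hcard).strictMono
    have hrange : ∀ j, ∃ i, s₀ i = v j := by
      intro j
      have : v j ∈ S := Finset.mem_image_of_mem v (Finset.mem_univ j)
      have := Finset.range_orderEmbOfFin S hcard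
      rw [Set.ext_iff] at this
      exact (this (v j)).mpr (by exact_mod_cast ‹v j ∈ S›)
    choose σf hσf using hrange
    have hσinj : Function.Injective σf := by
      intro a b hab
      apply hv
      rw [← hσf a, ← hσf b, hab]
    have hσbij := Finite.injective_iff_bijective.mp hσinj
    set σ : Equiv.Perm (Fin p) := Equiv.ofBijective σf hσbij with hσ
    have hσapp : ∀ j, s₀ (σ j) = v j := hσf
    rw [Finset.sum_eq_single s₀]
    · -- main term
      have hmat : (Matrix.of fun j i => (e (v j) : Fin q → R) (s₀ i)) =
          (1 : Matrix (Fin p) (Fin p) R).submatrix σ id := by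
        ext j i
        simp only [Matrix.of_apply, Matrix.submatrix_apply, id, Matrix.one_apply]
        rw [← hσapp j, he]
        simp only [Pi.basisFun_apply]
        rw [Pi.single_apply]
        by_cases hji : σ j = i
        · simp [hji]
        · rw [if_neg hji, if_neg (fun hc => hji (hs₀mono.injective hc).symm)]
      have hdet : minorForm s₀ (fun i => e (v i)) = ((Equiv.Perm.sign σ : ℤ) : R) := by
        rw [minorForm_apply, hmat, Matrix.det_permute, Matrix.det_one, mul_one]
      have hlhs : (A fun i => e (v i)) = Equiv.Perm.sign σ • A (fun i => e (s₀ i)) := by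
        have : (fun i => e (v i)) = (fun i => e (s₀ i)) ∘ σ := by
          funext i; simp [← hσapp i]
        rw [this, AlternatingMap.map_perm]
      rw [AlternatingMap.smul_apply, hdet, hlhs, smul_eq_mul, mul_comm]
      rw [Units.smul_def, zsmul_eq_mul]
    · -- other terms vanish
      intro s hs hne
      rw [Finset.mem_filter] at hs
      have hmono : StrictMono s := hs.2
      have : ∃ i₀, s i₀ ∉ S := by
        by_contra hc
        push_neg at hc
        exact hne (Finset.orderEmbOfFin_unique hcard hc hmono)
      obtain ⟨i₀, hi₀⟩ := this
      have hcol : ∀ j, (Matrix.of fun j i => (e (v j) : Fin q → R) (s i)) j i₀ = 0 := by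
        intro j
        have hne' : v j ≠ s i₀ := by
          intro hc; exact hi₀ (hc ▸ Finset.mem_image_of_mem v (Finset.mem_univ j))
        simp only [Matrix.of_apply, he, Pi.basisFun_apply]
        rw [Pi.single_apply, if_neg (fun hc => hne' hc.symm)]
      rw [AlternatingMap.smul_apply, minorForm_apply,
        Matrix.det_eq_zero_of_column_eq_zero i₀ hcol, smul_zero]
    · intro hs₀
      exact absurd (Finset.mem_filter.mpr ⟨Finset.mem_univ _, hs₀mono⟩) hs₀
  rw [key, altSum_apply]
  refine Ideal.sum_mem _ fun s hs => ?_
  rw [AlternatingMap.smul_apply, smul_eq_mul]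
  refine Ideal.mul_mem_left _ _ (Ideal.subset_span ⟨s, ?_⟩)
  rw [minorForm_apply, ← Matrix.det_transpose]
  rfl

end EXP
section EXP2
lemma alt_apply_span {p q D : ℕ} {R₀ : Type*} [CommRing R₀]
    (A : (Fin q → R₀) [⋀^Fin p]→ₗ[R₀] R₀)
    (S : Fin D → (Fin q → R₀)) (x : Fin p → (Fin q → R₀))
    (hx : ∀ j, x j ∈ Submodule.span R₀ (Set.range S)) :
    ∃ c : Fin p → Fin D → R₀,
      A x = ∑ r : Fin p → Fin D, (∏ j, c j (r j)) • A (fun j => S (r j)) := by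
  have hc : ∀ j, ∃ cj : Fin D → R₀, ∑ i, cj i • S i = x j := fun j =>
    (Submodule.mem_span_range_iff_exists_fun R₀).mp (hx j)
  choose c hc using hc
  refine ⟨c, ?_⟩
  have hx' : x = fun j => ∑ i, c j i • S i := by funext j; rw [hc j]
  rw [hx']
  rw [show (A fun j => ∑ i, c j i • S i) = A.toMultilinearMap fun j => ∑ i, c j i • S i from rfl]
  rw [MultilinearMap.map_sum]
  congr 1; funext r
  exact A.toMultilinearMap.map_smul_univ (fun j => c j (r j)) (fun j => S (r j))

lemma X_pow_dvd_le {k : Type*} [Field k] {s t : ℕ}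
    (h : (PowerSeries.X : PowerSeries k) ^ s ∣ PowerSeries.X ^ t) : s ≤ t := by
  by_contra hc
  push_neg at hc
  rw [PowerSeries.X_pow_dvd_iff] at h
  have := h t hc
  rw [PowerSeries.coeff_X_pow] at this
  simp at this
end EXP2

section MAIN
variable {k : Type*} [Field k]
local notation "V" => PowerSeries k

lemma main_snf {q p D E : ℕ} (S : Fin D → (Fin q → V))
    (hI : Ideal.span {x : V | ∃ (ri : Fin p → Fin q) (ci : Fin p → Fin D),
        x = Matrix.det (Matrix.of fun i j => S (ci j) (ri i))} =
      Ideal.span {(PowerSeries.X : V) ^ E})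
    (hrank : ∀ x : Fin (p + 1) → (Fin q → V), (∀ i, x i ∈ Submodule.span V (Set.range S)) →
      ¬ LinearIndependent V x) :
    ∃ (b : Module.Basis (Fin q) V (Fin q → V)) (f : Fin p ↪ Fin q) (c : Fin p → ℕ),
      (∑ i, c i = E) ∧ Submodule.span V (Set.range S) =
        Submodule.span V (Set.range fun i => (PowerSeries.X : V) ^ (c i) • b (f i)) := by
  classical
  set R : Submodule V (Fin q → V) := Submodule.span V (Set.range S) with hR
  set I : Ideal V := Ideal.span {x : V | ∃ (ri : Fin p → Fin q) (ci : Fin p → Fin D),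
        x = Matrix.det (Matrix.of fun i j => S (ci j) (ri i))} with hIdef
  obtain ⟨m, bM, bN, f, a, hsnf⟩ := Submodule.smithNormalForm (Pi.basisFun V (Fin q)) R
  -- the family spanning R
  set T : Fin m → (Fin q → V) := fun i => a i • bM (f i) with hT
  have hTmem : ∀ i, T i ∈ R := by
    intro i; rw [hT]; simp only [← hsnf i]; exact Submodule.coe_mem _
  have hRspan : R = Submodule.span V (Set.range T) := by
    conv_lhs => rw [← Submodule.map_subtype_top R, ← Module.Basis.span_eq bN]
    rw [Submodule.map_span, ← Set.range_comp]
    congr 1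
    apply congrArg
    funext i
    exact hsnf i
  -- m ≤ p
  have hbNind : LinearIndependent V (fun i => (bN i : Fin q → V)) :=
    bN.linearIndependent.map' R.subtype (Submodule.ker_subtype R)
  have hmlep : m ≤ p := by
    by_contra hc
    push_neg at hc
    have hle : p + 1 ≤ m := hc
    refine hrank (fun i => (bN (Fin.castLE hle i) : Fin q → V)) (fun i => Submodule.coe_mem _) ?_
    exact hbNind.comp (Fin.castLE hle) (Fin.castLE_injective hle)
  -- claim 1 : values of alternating maps on R lie in span of injective products of a
  set J : Ideal V := Ideal.span {y : V | ∃ r : Fin p → Fin m,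
      Function.Injective r ∧ y = ∏ j, a (r j)} with hJdef
  have claim1 : ∀ (A : (Fin q → V) [⋀^Fin p]→ₗ[V] V) (x : Fin p → (Fin q → V)),
      (∀ j, x j ∈ R) → A x ∈ J := by
    intro A x hx
    obtain ⟨c, hcA⟩ := alt_apply_span A T x (by rwa [← hRspan])
    rw [hcA]
    refine Ideal.sum_mem _ fun r _ => ?_
    by_cases hr : Function.Injective r
    · have : (A fun j => T (r j)) = (∏ j, a (r j)) • A (fun j => bM (f (r j))) := by
        rw [hT]
        exact A.toMultilinearMap.map_smul_univ (fun j => a (r j)) (fun j => bM (f (r j)))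
      have hmem : (∏ j, a (r j)) ∈ J := by
        rw [hJdef]; exact Ideal.subset_span ⟨r, hr, rfl⟩
      rw [this, smul_eq_mul, smul_eq_mul, ← mul_assoc, mul_comm ((∏ j, c j (r j))) _, mul_assoc]
      exact Ideal.mul_mem_right _ _ hmem
    · have : ¬ Function.Injective (fun j => T (r j)) := by
        intro hinj
        obtain ⟨j₁, j₂, hj, hne⟩ := Function.not_injective_iff.mp hr
        exact hne (hinj (show T (r j₁) = T (r j₂) by rw [hj]))
      rw [A.map_eq_zero_of_not_injective _ this, smul_zero]
      exact Ideal.zero_mem _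
  -- claim 2 : values of alternating maps on R lie in I
  have claim2 : ∀ (A : (Fin q → V) [⋀^Fin p]→ₗ[V] V) (x : Fin p → (Fin q → V)),
      (∀ j, x j ∈ R) → A x ∈ I := by
    intro A x hx
    obtain ⟨c, hcA⟩ := alt_apply_span A S x (by rwa [← hR])
    rw [hcA]
    refine Ideal.sum_mem _ fun r _ => ?_
    refine Submodule.smul_mem _ _ ?_
    refine Ideal.span_mono ?_ (alt_mem_minorSpan A (fun j => S (r j)))
    rintro y ⟨ri, rfl⟩
    exact ⟨ri, r, rfl⟩
  -- generators of I are values of alternating maps on R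
  have hIleJ : I ≤ J := by
    rw [hIdef]
    rw [Ideal.span_le]
    rintro y ⟨ri, ci, rfl⟩
    have : Matrix.det (Matrix.of fun i j => S (ci j) (ri i)) = minorForm ri (fun j => S (ci j)) := by
      rw [minorForm_apply, ← Matrix.det_transpose]
      rfl
    rw [this]
    exact claim1 _ _ (fun j => Submodule.subset_span ⟨ci j, rfl⟩)
  -- p ≤ m
  have hXE : (PowerSeries.X : V) ^ E ≠ 0 := pow_ne_zero _ PowerSeries.X_ne_zero
  have hplem : p ≤ m := by
    by_contra hc
    push_neg at hc
    have : J = ⊥ := by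
      rw [hJdef]
      convert Ideal.span_empty
      rw [Set.eq_empty_iff_forall_notMem]
      rintro y ⟨r, hr, -⟩
      have := Fintype.card_le_of_injective r hr
      simp only [Fintype.card_fin] at this
      omega
    have : (PowerSeries.X : V) ^ E ∈ (⊥ : Ideal V) := by
      rw [← this]
      exact hIleJ (hI ▸ Ideal.subset_span rfl)
    exact hXE (by simpa using this)
  have hmp : m = p := le_antisymm hmlep hplem
  subst hmp
  -- J = span {∏ a}
  have hJ : J = Ideal.span {∏ i, a i} := by
    rw [hJdef]
    congr 1
    ext y
    constructor
    · rintro ⟨r, hr, rfl⟩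
      have hbij : Function.Bijective r := Finite.injective_iff_bijective.mp hr
      exact (Function.Bijective.prod_comp hbij a)
    · rintro rfl
      exact ⟨id, Function.injective_id, by simp⟩
  -- ∏ a ∈ I via the dual minor
  have hprodI : (∏ i, a i) ∈ I := by
    set φ : (Fin q → V) →ₗ[V] (Fin m → V) := LinearMap.pi (fun i => bM.coord (f i)) with hφ
    set A : (Fin q → V) [⋀^Fin m]→ₗ[V] V := Matrix.detRowAlternating.compLinearMap φ with hA
    have hval : A T = ∏ i, a i := by
      have : A T = Matrix.det (Matrix.of fun j i => bM.coord (f i) (T j)) := rfl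
      rw [this]
      have hdiag : (Matrix.of fun j i => bM.coord (f i) (T j)) = Matrix.diagonal a := by
        ext j i
        rw [hT]
        simp only [Matrix.of_apply, Matrix.diagonal_apply, map_smul, smul_eq_mul]
        rw [Module.Basis.coord_apply, Module.Basis.repr_self, Finsupp.single_apply]
        by_cases hji : j = i
        · subst hji; simp
        · rw [if_neg (fun hc => hji (f.injective hc)), if_neg hji, mul_zero]
      rw [hdiag, Matrix.det_diagonal]
    rw [← hval]
    exact claim2 A T hTmem
  -- I = span {∏ a}
  have hIeq : I = Ideal.span {∏ i, a i} := by
    refine le_antisymm (hJ ▸ hIleJ) ?_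
    rw [Ideal.span_le, Set.singleton_subset_iff]
    exact hprodI
  -- factor each a i
  have hprodne : (∏ i, a i) ≠ 0 := by
    intro hc
    rw [hc] at hIeq
    rw [hI] at hIeq
    have : (PowerSeries.X : V) ^ E ∈ Ideal.span ({0} : Set V) := hIeq ▸ Ideal.subset_span rfl
    rw [Ideal.span_singleton_eq_bot.mpr rfl] at this
    exact hXE (by simpa using this)
  have hane : ∀ i, a i ≠ 0 := by
    intro i hc
    exact hprodne (Finset.prod_eq_zero (Finset.mem_univ i) hc)
  have hXirr : Irreducible (PowerSeries.X : V) := PowerSeries.X_prime.irreducible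
  have hfac : ∀ i, ∃ (c : ℕ) (u : Vˣ), a i = (u : PowerSeries k) * PowerSeries.X ^ c := by
    intro i
    obtain ⟨c, u, hcu⟩ := IsDiscreteValuationRing.eq_unit_mul_pow_irreducible (hane i) hXirr
    exact ⟨c, u, hcu⟩
  choose c u hcu using hfac
  -- ∑ c = E
  have hprodfac : (∏ i, a i) = (↑(∏ i, u i) : V) * PowerSeries.X ^ (∑ i, c i) := by
    have h1 : (↑(∏ i, u i) : V) = ∏ i, ((u i : V)) := map_prod (Units.coeHom V) u Finset.univ
    rw [← Finset.prod_pow_eq_pow_sum, h1, ← Finset.prod_mul_distrib]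
    exact Finset.prod_congr rfl fun i _ => hcu i
  have hsum : (∑ i, c i) = E := by
    have h1 : (PowerSeries.X : V) ^ E ∈ Ideal.span {∏ i, a i} := by
      rw [← hIeq, hI]; exact Ideal.subset_span rfl
    have h2 : (∏ i, a i) ∈ Ideal.span {(PowerSeries.X : V) ^ E} := by
      rw [← hI, hIeq]; exact Ideal.subset_span rfl
    rw [Ideal.mem_span_singleton] at h1 h2
    -- h1 : ∏ a ∣ X^E, h2 : X^E ∣ ∏ a
    rw [hprodfac] at h1 h2
    have hd1 : (PowerSeries.X : V) ^ (∑ i, c i) ∣ PowerSeries.X ^ E :=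
      dvd_trans (Dvd.intro_left _ rfl) h1
    have hd2 : (PowerSeries.X : V) ^ E ∣ PowerSeries.X ^ (∑ i, c i) :=
      (Units.dvd_mul_left).mp h2
    exact le_antisymm (X_pow_dvd_le hd1) (X_pow_dvd_le hd2)
  -- adjust basis by units
  let w : Fin q → Vˣ := fun j => if hj : ∃ i, f i = j then u hj.choose else 1
  have hwf : ∀ i, w (f i) = u i := by
    intro i
    have hj : ∃ i', f i' = f i := ⟨i, rfl⟩
    show (if hj : ∃ i', f i' = f i then u hj.choose else 1) = u i
    rw [dif_pos hj]
    congr 1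
    exact f.injective hj.choose_spec
  refine ⟨bM.unitsSMul w, f, c, hsum, ?_⟩
  rw [hRspan]
  congr 1
  apply congrArg
  funext i
  simp only [hT]
  rw [Module.Basis.unitsSMul_apply, hwf i, hcu i, Units.smul_def, smul_smul]
  congr 1
  ring
end MAIN


section QUOT
variable {V' : Type*} [CommRing V']

lemma quot_span_smul_basis {s : ℕ} {M : Type*} [AddCommGroup M]
    [Module V' M] (b : Module.Basis (Fin s) V' M) (μ : Fin s → V') :
    Nonempty ((M ⧸ Submodule.span V' (Set.range fun i => μ i • b i)) ≃ₗ[V']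
      Π i : Fin s, V' ⧸ Ideal.span {μ i}) := by
  classical
  have hgen : ∀ i, b.equivFun (μ i • b i) = μ i • (Pi.single i 1 : Fin s → V') := by
    intro i
    rw [map_smul]
    congr 1
    ext j
    rw [Module.Basis.equivFun_apply, Module.Basis.repr_self]
    rw [Finsupp.single_apply, Pi.single_apply]
    by_cases hij : i = j
    · subst hij; simp
    · rw [if_neg hij, if_neg (fun hc => hij hc.symm)]
  have hmap : (Submodule.span V' (Set.range fun i => μ i • b i)).map
      ((b.equivFun : M ≃ₗ[V'] (Fin s → V')) : M →ₗ[V'] (Fin s → V')) =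
      Submodule.pi Set.univ (fun i => Ideal.span {μ i}) := by
    apply le_antisymm
    · rw [Submodule.map_span, Submodule.span_le, ← Set.range_comp]
      rintro y ⟨i, rfl⟩
      intro j _
      simp only [Function.comp_apply, LinearEquiv.coe_coe]
      rw [hgen i]
      rw [Pi.smul_apply, Pi.single_apply, smul_eq_mul]
      by_cases hji : j = i
      · subst hji
        rw [if_pos rfl, mul_one]
        exact Ideal.subset_span rfl
      · rw [if_neg hji, mul_zero]
        exact Ideal.zero_mem _
    · intro y hy
      have hy' : ∀ j, ∃ a : V', a * μ j = y j := by
        intro j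
        exact Ideal.mem_span_singleton'.mp (hy j (Set.mem_univ j))
      choose dc hdc using hy'
      rw [Submodule.map_span, ← Set.range_comp]
      rw [Submodule.mem_span_range_iff_exists_fun]
      refine ⟨dc, ?_⟩
      funext j
      rw [Finset.sum_apply]
      have hterm : ∀ i, (dc i • (⇑((b.equivFun : M ≃ₗ[V'] (Fin s → V')) : M →ₗ[V'] (Fin s → V')) ∘
          fun i => μ i • b i) i) j = if i = j then y j else 0 := by
        intro i
        simp only [Function.comp_apply, LinearEquiv.coe_coe]
        rw [hgen i]
        rw [Pi.smul_apply, Pi.smul_apply, Pi.single_apply, smul_eq_mul, smul_eq_mul]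
        by_cases hij : i = j
        · subst hij; rw [if_pos rfl, if_pos rfl, mul_one, hdc]
        · rw [if_neg (fun hc => hij hc.symm), mul_zero, mul_zero, if_neg hij]
      rw [Finset.sum_congr rfl (fun i _ => hterm i), Finset.sum_ite_eq' Finset.univ j _]
      rw [if_pos (Finset.mem_univ j)]
  exact ⟨(Submodule.Quotient.equiv _ _ (b.equivFun : M ≃ₗ[V'] (Fin s → V')) hmap).trans
      (Submodule.quotientPi _)⟩
end QUOT

section BRIDGE
variable {k : Type*} [Field k]
local notation "V" => PowerSeries k

lemma ideal_minors_full {q D : ℕ} (S : Fin D → (Fin q → V)) :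
    Ideal.span {x : V | ∃ (ri : Fin q → Fin q) (ci : Fin q → Fin D),
        x = Matrix.det (Matrix.of fun i j => S (ci j) (ri i))} =
    Ideal.span {x : V | ∃ ci : Fin q → Fin D,
        x = Matrix.det (Matrix.of fun a b => S (ci b) a)} := by
  apply le_antisymm
  · rw [Ideal.span_le]
    rintro y ⟨ri, ci, rfl⟩
    by_cases hri : Function.Injective ri
    · have hbij := Finite.injective_iff_bijective.mp hri
      set σ : Equiv.Perm (Fin q) := Equiv.ofBijective ri hbij with hσ
      have hmat : (Matrix.of fun i j => S (ci j) (ri i)) =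
          (Matrix.of fun a b => S (ci b) a).submatrix σ id := rfl
      rw [hmat, Matrix.det_permute]
      exact Ideal.mul_mem_left _ _ (Ideal.subset_span ⟨ci, rfl⟩)
    · obtain ⟨i₁, i₂, hii, hne⟩ := Function.not_injective_iff.mp hri
      have hz : Matrix.det (Matrix.of fun i j => S (ci j) (ri i)) = 0 := by
        apply Matrix.det_zero_of_row_eq hne
        funext j
        simp only [Matrix.of_apply, hii]
      rw [hz]
      exact Ideal.zero_mem _
  · rw [Ideal.span_le]
    rintro y ⟨ci, rfl⟩
    exact Ideal.subset_span ⟨id, ci, rfl⟩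
end BRIDGE

set_option maxHeartbeats 1000000 in
/-- (Module-theoretic content over `V = k[[t]]`.)  Let
`h : P → V^n` be a map of finitely generated `V`-modules (modelling
`γ*(f*Ω_X) → γ*Ω_{X'}` with `γ*Ω_{X'}` free of rank `n`), and suppose that the `0`-th Fitting
ideal of `coker h = γ*Ω_{X'/X}` is `(t^e)` (the ideal of `n×n` minors of a matrix of `h`) and
the `n`-th Fitting ideal of `P` is `(t^{e'})` (the ideal of `(d-n)`-minors of a relation
matrix of a presentation `V^{d'} → V^d → P → 0`).  Then
`coker h ≅ ⊕_{i=1}^n k[t]/(t^{a_i})` with `Σ a_i = e` and all `a_i ≤ e`, and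
`ker h ≅ ⊕_{i=1}^s k[t]/(t^{b_i})` with `Σ b_i = e'`. -/
theorem statement_18 (k : Type*) [Field k] (n e e' : ℕ)
    (P : Type*) [AddCommGroup P] [Module (PowerSeries k) P] [Module.Finite (PowerSeries k) P]
    (h : P →ₗ[PowerSeries k] (Fin n → PowerSeries k))
    (hfitt0 : ∃ (d : ℕ) (g : Fin d → P),
      Submodule.span (PowerSeries k) (Set.range g) = ⊤ ∧
      Ideal.span {x : PowerSeries k | ∃ ci : Fin n → Fin d,
          x = Matrix.det (Matrix.of fun a b => h (g (ci b)) a)} =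
        Ideal.span {(PowerSeries.X : PowerSeries k) ^ e})
    (hfittn : ∃ (d d' : ℕ) (π : (Fin d → PowerSeries k) →ₗ[PowerSeries k] P)
        (B : Matrix (Fin d) (Fin d') (PowerSeries k)),
      Function.Surjective π ∧ LinearMap.ker π = LinearMap.range B.mulVecLin ∧
      Ideal.span {x : PowerSeries k | ∃ (ri : Fin (d - n) → Fin d) (ci : Fin (d - n) → Fin d'),
          x = Matrix.det (B.submatrix ri ci)} =
        Ideal.span {(PowerSeries.X : PowerSeries k) ^ e'}) :
    (∃ a : Fin n → ℕ, (∀ i, a i ≤ e) ∧ (∑ i, a i = e) ∧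
      Nonempty (((Fin n → PowerSeries k) ⧸ LinearMap.range h) ≃ₗ[PowerSeries k]
        (Π i : Fin n, PowerSeries k ⧸ Ideal.span {(PowerSeries.X : PowerSeries k) ^ a i}))) ∧
    (∃ (s : ℕ) (b : Fin s → ℕ), (∑ i, b i = e') ∧
      Nonempty ((↥(LinearMap.ker h)) ≃ₗ[PowerSeries k]
        (Π i : Fin s, PowerSeries k ⧸ Ideal.span {(PowerSeries.X : PowerSeries k) ^ b i}))) := by
  classical
  set V := PowerSeries k
  obtain ⟨d₀, g, hg, hIg⟩ := hfitt0
  -- Part 1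
  set S1 : Fin d₀ → (Fin n → V) := fun j => h (g j) with hS1
  have hspan1 : Submodule.span V (Set.range S1) = LinearMap.range h := by
    have : Set.range S1 = ⇑h '' Set.range g := Set.range_comp (⇑h) g
    rw [this, Submodule.span_image, hg, Submodule.map_top]
  have hrankfull : ∀ (N : ℕ) (x : Fin N → (Fin n → V)), LinearIndependent V x → N ≤ n := by
    intro N x hind
    have := hind.fintype_card_le_finrank
    simpa using this
  have hrank1 : ∀ x : Fin (n + 1) → (Fin n → V),
      (∀ i, x i ∈ Submodule.span V (Set.range S1)) → ¬ LinearIndependent V x := by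
    intro x _ hind
    have := hrankfull _ x hind
    omega
  have hI1 : Ideal.span {x : V | ∃ (ri : Fin n → Fin n) (ci : Fin n → Fin d₀),
      x = Matrix.det (Matrix.of fun i j => S1 (ci j) (ri i))} =
      Ideal.span {(PowerSeries.X : V) ^ e} := by
    rw [ideal_minors_full S1]
    exact hIg
  obtain ⟨b1, f1, c1, hsum1, hspan1'⟩ := main_snf S1 hI1 hrank1
  have hf1bij : Function.Bijective f1 := Finite.injective_iff_bijective.mp f1.injective
  set σ1 : Fin n ≃ Fin n := Equiv.ofBijective f1 hf1bij with hσ1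
  set b2 : Module.Basis (Fin n) V (Fin n → V) := b1.reindex σ1.symm with hb2def
  have hb2 : ∀ i, b2 i = b1 (f1 i) := by
    intro i
    rw [hb2def, Module.Basis.reindex_apply, Equiv.symm_symm]
    rfl
  have hle1 : ∀ i, c1 i ≤ e := by
    intro i
    rw [← hsum1]
    exact Finset.single_le_sum (fun j _ => Nat.zero_le _) (Finset.mem_univ i)
  have hrangeEq : LinearMap.range h =
      Submodule.span V (Set.range fun i => (PowerSeries.X : V) ^ (c1 i) • b2 i) := by
    rw [← hspan1, hspan1']
    congr 1
    apply congrArg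
    funext i
    rw [hb2]
  obtain ⟨eqv1⟩ := quot_span_smul_basis b2 (fun i => (PowerSeries.X : V) ^ (c1 i))
  have part1 : Nonempty (((Fin n → V) ⧸ LinearMap.range h) ≃ₗ[V]
      (Π i : Fin n, V ⧸ Ideal.span {(PowerSeries.X : V) ^ (c1 i)})) := by
    rw [hrangeEq]
    exact ⟨eqv1⟩
  obtain ⟨eqv1'⟩ := part1
  refine ⟨⟨c1, hle1, hsum1, ⟨eqv1'⟩⟩, ?_⟩
  -- Part 2
  obtain ⟨d, d', π, B, hπs, hkerπ, hIB⟩ := hfittn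
  set g2 : (Fin d → V) →ₗ[V] (Fin n → V) := h ∘ₗ π with hg2def
  set S2 : Fin d' → (Fin d → V) := fun j i => B i j with hS2
  have hspan2 : Submodule.span V (Set.range S2) = LinearMap.ker π := by
    rw [hkerπ, Matrix.range_mulVecLin]
    rfl
  have hkerle : LinearMap.ker π ≤ LinearMap.ker g2 := by
    intro z hz
    rw [LinearMap.mem_ker] at hz ⊢
    rw [hg2def, LinearMap.comp_apply, hz, map_zero]
  -- torsion bound from part 1
  have hXe : (PowerSeries.X : V) ^ e ≠ 0 := pow_ne_zero _ PowerSeries.X_ne_zero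
  have htor : ∀ y : Fin n → V, (PowerSeries.X : V) ^ e • y ∈ LinearMap.range h := by
    intro y
    have hz : ∀ z : (Π i : Fin n, V ⧸ Ideal.span {(PowerSeries.X : V) ^ (c1 i)}),
        (PowerSeries.X : V) ^ e • z = 0 := by
      intro z
      funext i
      obtain ⟨w, hw⟩ := Submodule.Quotient.mk_surjective _ (z i)
      rw [Pi.smul_apply, ← hw, ← Submodule.Quotient.mk_smul, Pi.zero_apply]
      rw [Submodule.Quotient.mk_eq_zero]
      refine Ideal.mem_span_singleton.mpr ?_
      have h1 : (PowerSeries.X : V) ^ (c1 i) ∣ (PowerSeries.X : V) ^ e :=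
        pow_dvd_pow _ (hle1 i)
      exact h1.trans (Dvd.intro w rfl)
    have h0 : eqv1' (Submodule.Quotient.mk ((PowerSeries.X : V) ^ e • y)) = 0 := by
      rw [Submodule.Quotient.mk_smul, map_smul, hz]
    rwa [LinearEquiv.map_eq_zero_iff, Submodule.Quotient.mk_eq_zero] at h0
  -- preimages of scaled standard vectors
  have hu : ∀ j : Fin n, ∃ v : Fin d → V,
      g2 v = (PowerSeries.X : V) ^ e • (Pi.single j 1 : Fin n → V) := by
    intro j
    obtain ⟨z, hz⟩ := htor (Pi.single j 1 : Fin n → V)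
    obtain ⟨w, hw⟩ := hπs z
    exact ⟨w, by rw [hg2def, LinearMap.comp_apply, hw, hz]⟩
  choose u huspec using hu
  -- cardinality bound for independent families in ker g2
  have hbound : ∀ (ι : Type) (_ : Fintype ι) (x : ι → (Fin d → V)),
      (∀ i, x i ∈ LinearMap.ker g2) → LinearIndependent V x → Fintype.card ι + n ≤ d := by
    intro ι hι x hxker hxind
    have hind2 : LinearIndependent V (Sum.elim x u) := by
      rw [Fintype.linearIndependent_iff]
      intro co hco
      have hco' : (∑ i : ι, co (Sum.inl i) • x i) +
          (∑ j : Fin n, co (Sum.inr j) • u j) = 0 := by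
        have := hco
        rw [Fintype.sum_sum_type] at this
        simpa only [Sum.elim_inl, Sum.elim_inr] using this
      have happ : (∑ j : Fin n, co (Sum.inr j) •
          ((PowerSeries.X : V) ^ e • (Pi.single j 1 : Fin n → V))) = 0 := by
        have h1 : g2 ((∑ i : ι, co (Sum.inl i) • x i) +
            (∑ j : Fin n, co (Sum.inr j) • u j)) = 0 := by rw [hco', map_zero]
        rw [map_add, map_sum, map_sum] at h1
        have h2 : (∑ i : ι, g2 (co (Sum.inl i) • x i)) = 0 := by
          apply Finset.sum_eq_zero
          intro i _
          rw [map_smul, LinearMap.mem_ker.mp (hxker i), smul_zero]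
        rw [h2, zero_add] at h1
        calc (∑ j : Fin n, co (Sum.inr j) •
            ((PowerSeries.X : V) ^ e • (Pi.single j 1 : Fin n → V)))
            = ∑ j : Fin n, g2 (co (Sum.inr j) • u j) := by
              refine Finset.sum_congr rfl fun j _ => ?_
              rw [map_smul, huspec j]
          _ = 0 := h1
      have hrz : ∀ j : Fin n, co (Sum.inr j) = 0 := by
        intro j₀
        have := congrFun happ j₀
        rw [Finset.sum_apply] at this
        have hterm : ∀ j : Fin n, (co (Sum.inr j) •
            ((PowerSeries.X : V) ^ e • (Pi.single j 1 : Fin n → V))) j₀ =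
            if j₀ = j then co (Sum.inr j) * (PowerSeries.X : V) ^ e else 0 := by
          intro j
          rw [Pi.smul_apply, Pi.smul_apply, Pi.single_apply, smul_eq_mul, smul_eq_mul]
          by_cases hj : j₀ = j
          · rw [if_pos hj, if_pos hj, mul_one]
          · rw [if_neg hj, if_neg hj, mul_zero, mul_zero]
        rw [Finset.sum_congr rfl (fun j _ => hterm j)] at this
        simp only [Finset.sum_ite_eq Finset.univ j₀, Finset.mem_univ, if_pos] at this
        rcases mul_eq_zero.mp this with hc | hc
        · exact hc
        · exact absurd hc hXe
      have hlz : (∑ i : ι, co (Sum.inl i) • x i) = 0 := by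
        have : (∑ j : Fin n, co (Sum.inr j) • u j) = 0 := by
          apply Finset.sum_eq_zero
          intro j _
          rw [hrz j, zero_smul]
        rw [this, add_zero] at hco'
        exact hco'
      intro i
      match i with
      | Sum.inl i => exact Fintype.linearIndependent_iff.mp hxind _ hlz i
      | Sum.inr j => exact hrz j
    have hcard := hind2.fintype_card_le_finrank
    simpa [Fintype.card_sum] using hcard
  have hrank2 : ∀ x : Fin (d - n + 1) → (Fin d → V),
      (∀ i, x i ∈ Submodule.span V (Set.range S2)) → ¬ LinearIndependent V x := by
    intro x hx hind
    have hker : ∀ i, x i ∈ LinearMap.ker g2 := by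
      intro i
      refine hkerle ?_
      rw [← hspan2]
      exact hx i
    have := hbound _ inferInstance x hker hind
    simp only [Fintype.card_fin] at this
    omega
  have hI2 : Ideal.span {x : V | ∃ (ri : Fin (d - n) → Fin d) (ci : Fin (d - n) → Fin d'),
      x = Matrix.det (Matrix.of fun i j => S2 (ci j) (ri i))} =
      Ideal.span {(PowerSeries.X : V) ^ e'} := by
    convert hIB using 3
    rfl
  obtain ⟨b3, f3, c3, hsum3, hspan3⟩ := main_snf S2 hI2 hrank2
  -- the kernel K equals the span W of the basis vectors b3 (f3 i)
  set K := LinearMap.ker g2 with hKdef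
  set W := Submodule.span V (Set.range fun i => b3 (f3 i)) with hWdef
  have hXc : ∀ i, (PowerSeries.X : V) ^ (c3 i) ≠ 0 := fun i =>
    pow_ne_zero _ PowerSeries.X_ne_zero
  have hbfK : ∀ i, b3 (f3 i) ∈ K := by
    intro i
    have h1 : (PowerSeries.X : V) ^ (c3 i) • b3 (f3 i) ∈ K := by
      refine hkerle ?_
      rw [← hspan2, hspan3]
      exact Submodule.subset_span ⟨i, rfl⟩
    rw [hKdef, LinearMap.mem_ker] at h1 ⊢
    rw [map_smul] at h1
    funext j
    have := congrFun h1 j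
    rw [Pi.smul_apply, smul_eq_mul] at this
    rcases mul_eq_zero.mp this with hc | hc
    · exact absurd hc (hXc i)
    · exact hc
  have hWK : W ≤ K := by
    rw [hWdef, Submodule.span_le]
    rintro y ⟨i, rfl⟩
    exact hbfK i
  have hKW : K ≤ W := by
    intro x hx
    have hcoord : ∀ j, j ∉ Set.range ⇑f3 → b3.repr x j = 0 := by
      intro j₀ hj₀
      by_contra hc
      set y : Option (Fin (d - n)) → (Fin d → V) := fun o => o.elim x (fun i => b3 (f3 i))
        with hydef
      have hyK : ∀ o, y o ∈ K := by
        intro o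
        match o with
        | none => exact hx
        | some i => exact hbfK i
      have hyind : LinearIndependent V y := by
        rw [Fintype.linearIndependent_iff]
        intro co hco
        have h0 : co none = 0 := by
          have h1 : b3.coord j₀ (∑ o : Option (Fin (d - n)), co o • y o) = 0 := by
            rw [hco, map_zero]
          rw [map_sum, Fintype.sum_option] at h1
          have h2 : ∀ i : Fin (d - n), b3.coord j₀ (co (some i) • y (some i)) = 0 := by
            intro i
            rw [map_smul]
            have hy0 : b3.coord j₀ (y (some i)) = 0 := by
              show b3.coord j₀ (b3 (f3 i)) = 0
              rw [Module.Basis.coord_apply, Module.Basis.repr_self, Finsupp.single_apply,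
                if_neg (fun hcc => hj₀ ⟨i, hcc⟩)]
            rw [hy0, smul_zero]
          rw [Finset.sum_congr rfl (fun i _ => h2 i), Finset.sum_const_zero, add_zero,
            map_smul, smul_eq_mul] at h1
          rcases mul_eq_zero.mp h1 with hcc | hcc
          · exact hcc
          · exfalso
            apply hc
            have : b3.coord j₀ (y none) = b3.repr x j₀ := by
              show b3.coord j₀ x = b3.repr x j₀
              rw [Module.Basis.coord_apply]
            rwa [this] at hcc
        have h1 : (∑ i : Fin (d - n), co (some i) • b3 (f3 i)) = 0 := by
          have := hco
          rw [Fintype.sum_option, h0, zero_smul, zero_add] at this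
          exact this
        have hindbf : LinearIndependent V (fun i => b3 (f3 i)) :=
          b3.linearIndependent.comp ⇑f3 f3.injective
        intro o
        match o with
        | none => exact h0
        | some i => exact Fintype.linearIndependent_iff.mp hindbf _ h1 i
      have := hbound _ inferInstance y hyK hyind
      simp only [Fintype.card_option, Fintype.card_fin] at this
      omega
    have hsum := Module.Basis.sum_repr b3 x
    rw [← hsum]
    refine Submodule.sum_mem _ fun j _ => ?_
    by_cases hj : j ∈ Set.range ⇑f3
    · obtain ⟨i, rfl⟩ := hj
      exact Submodule.smul_mem _ _ (Submodule.subset_span ⟨i, rfl⟩)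
    · rw [hcoord j hj, zero_smul]
      exact Submodule.zero_mem _
  have hKWeq : W = K := le_antisymm hWK hKW
  -- ker h as a quotient of K
  have hπK : ∀ x ∈ K, π x ∈ LinearMap.ker h := by
    intro x hx
    rw [LinearMap.mem_ker]
    rw [hKdef, LinearMap.mem_ker, hg2def, LinearMap.comp_apply] at hx
    exact hx
  set ρ : K →ₗ[V] (LinearMap.ker h) := π.restrict hπK with hρdef
  have hρs : Function.Surjective ρ := by
    rintro ⟨z, hz⟩
    obtain ⟨w, hw⟩ := hπs z
    have hwK : w ∈ K := by
      rw [hKdef, LinearMap.mem_ker, hg2def, LinearMap.comp_apply, hw]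
      exact hz
    exact ⟨⟨w, hwK⟩, Subtype.ext (by simpa [hρdef, LinearMap.restrict_apply] using hw)⟩
  have hkerρ : LinearMap.ker ρ = Submodule.comap K.subtype (LinearMap.ker π) := by
    ext z
    simp only [LinearMap.mem_ker, Submodule.mem_comap, hρdef, LinearMap.restrict_apply,
      Submodule.coe_subtype]
    constructor
    · intro hz
      have := congrArg Subtype.val hz
      simpa using this
    · intro hz
      exact Subtype.ext (by simpa using hz)
  -- basis of K
  have hindbf : LinearIndependent V (fun i => b3 (f3 i)) :=
    b3.linearIndependent.comp ⇑f3 f3.injective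
  set bK : Module.Basis (Fin (d - n)) V K :=
    (Module.Basis.span hindbf).map (LinearEquiv.ofEq _ _ hKWeq) with hbKdef
  have hbK : ∀ i, (bK i : Fin d → V) = b3 (f3 i) := by
    intro i
    rw [hbKdef, Module.Basis.map_apply]
    have := Module.Basis.span_apply hindbf i
    simpa using congrArg Subtype.val (congrArg (LinearEquiv.ofEq _ _ hKWeq) rfl) |>.symm ▸ this
  have hkerρ' : LinearMap.ker ρ =
      Submodule.span V (Set.range fun i => (PowerSeries.X : V) ^ (c3 i) • bK i) := by
    apply Submodule.map_injective_of_injective (Submodule.injective_subtype K)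
    rw [hkerρ, Submodule.map_comap_subtype, Submodule.map_span, ← Set.range_comp]
    have h1 : K ⊓ LinearMap.ker π = LinearMap.ker π := inf_eq_right.mpr hkerle
    rw [h1]
    rw [← hspan2, hspan3]
    congr 1
    apply congrArg
    funext i
    simp only [Function.comp_apply, Submodule.coe_subtype, Submodule.coe_smul]
    rw [hbK i]
  obtain ⟨eqv2⟩ := quot_span_smul_basis bK (fun i => (PowerSeries.X : V) ^ (c3 i))
  have e1 : (↥K ⧸ LinearMap.ker ρ) ≃ₗ[V] ↥(LinearMap.ker h) :=
    ρ.quotKerEquivOfSurjective hρs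
  rw [hkerρ'] at e1
  exact ⟨d - n, c3, hsum3, ⟨e1.symm.trans eqv2⟩⟩
end
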